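/- arXiv:2602.11439 — 3 statements merged into one kernel-verified Lean document; each statement's English description precedes it below -/
import Mathlib

section
/- Let β, γ ∈ (0,1), δ > 0, 0 < c⁻ < c⁺, r ≥ (1−β)·c⁺·δ/(1−γ), and c⁻ ≥ max{ (1 + βγ/2)·(1−βγ)·c⁺, βγ·(1−β²γ²)·c⁺ }. Let L ≥ 2 and μ_l = δ·(l−1)/(1−γ) for l = 1,…,L. Then the multi-level Bellman operator T with these thresholds has a unique bounded fixed point W : {1,…,L} × [0, μ_L] → ℝ, this W is continuous and nondecreasing in x, satisfies W(l, x) = W(l, μ_{l+1}) for every l ∈ {1,…,L−1} and every x ∈ [μ_{max(l−1,1)}, μ_{l+1}] (constancy on the promotion region, so the agent at level l with attribute at least μ_{l−1} is indifferent up to improving exactly to μ_{l+1}), is (1−β^kγ^k)·c⁺-Lipschitz in x on [μ_{l−k−1}, μ_{l−k}] for each k = 0,…,l−1 (with μ₀ := 0), and satisfies W(l, μ_l) ≥ W(l+1, μ_{l+1}) for all l ∈ {1,…,L−1}. -/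
/-- The multi-level Bellman operator: `(T F)(l, x)` is the infimum over the available
relegation / staying / promotion branches of the one-step cost-to-go. Levels range over
`1,…,L`, attributes over `[0, μ L]`. -/
noncomputable def mlBell (β γ cplus cminus r δ : ℝ) (L : ℕ) (μ : ℕ → ℝ)
    (F : ℕ → ℝ → ℝ) (l : ℕ) (x : ℝ) : ℝ :=
  sInf { v : ℝ |
    (∃ xt u : ℝ, x ≤ xt ∧ xt ≤ μ L ∧ 0 ≤ u ∧ 2 ≤ l ∧ xt + u < μ l ∧
      v = (1 - β * γ) * cplus * xt + cminus * u - (r + β * cplus * δ) * ((l : ℝ) - 2)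
          + β * F (l - 1) (γ * xt + δ * ((l : ℝ) - 2))) ∨
    (∃ xt u : ℝ, x ≤ xt ∧ xt ≤ μ L ∧ 0 ≤ u ∧ μ l ≤ xt + u ∧ (l < L → xt + u < μ (l + 1)) ∧
      v = (1 - β * γ) * cplus * xt + cminus * u - (r + β * cplus * δ) * ((l : ℝ) - 1)
          + β * F l (γ * xt + δ * ((l : ℝ) - 1))) ∨
    (∃ xt u : ℝ, x ≤ xt ∧ xt ≤ μ L ∧ 0 ≤ u ∧ l < L ∧ μ (l + 1) ≤ xt + u ∧
      v = (1 - β * γ) * cplus * xt + cminus * u - (r + β * cplus * δ) * (l : ℝ)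
          + β * F (l + 1) (γ * xt + δ * (l : ℝ)) ) }

/-- The natural threshold sequence `μ_l = δ(l-1)/(1-γ)` (each level's steady-state
attribute), with the convention `μ₀ := 0`. -/
noncomputable def natThresh (γ δ : ℝ) (l : ℕ) : ℝ :=
  if l = 0 then 0 else δ * ((l : ℝ) - 1) / (1 - γ)

namespace S13

variable {β γ cplus cminus r δ : ℝ} {L : ℕ}

structure Hyp (β γ cplus cminus r δ : ℝ) (L : ℕ) : Prop where
  hβ0 : 0 < β
  hβ1 : β < 1
  hγ0 : 0 < γ
  hγ1 : γ < 1
  hδ : 0 < δ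
  hcm : 0 < cminus
  hcmcp : cminus < cplus
  hr : (1 - β) * cplus * δ / (1 - γ) ≤ r
  hcm2 : (1 + β * γ / 2) * (1 - β * γ) * cplus ≤ cminus
  hcm3 : β * γ * (1 - β ^ 2 * γ ^ 2) * cplus ≤ cminus
  hL : 2 ≤ L

variable {β γ cplus cminus r δ : ℝ} {L : ℕ}

namespace Hyp

variable {β γ cplus cminus r δ : ℝ} {L : ℕ}

lemma cp_pos (H : Hyp β γ cplus cminus r δ L) : 0 < cplus := H.hcm.trans H.hcmcp
lemma t_pos (H : Hyp β γ cplus cminus r δ L) : 0 < β * γ := mul_pos H.hβ0 H.hγ0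
lemma t_lt1 (H : Hyp β γ cplus cminus r δ L) : β * γ < 1 := by
  nlinarith [H.hβ0, H.hβ1, H.hγ0, H.hγ1]
lemma c1_pos (H : Hyp β γ cplus cminus r δ L) : 0 < (1 - β * γ) * cplus :=
  mul_pos (by linarith [H.t_lt1]) H.cp_pos
lemma c1_le_cm (H : Hyp β γ cplus cminus r δ L) : (1 - β * γ) * cplus ≤ cminus := by
  nlinarith [H.hcm2, H.t_pos, H.c1_pos]
lemma γ1 (H : Hyp β γ cplus cminus r δ L) : (0:ℝ) < 1 - γ := by linarith [H.hγ1]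
lemma r_nonneg (H : Hyp β γ cplus cminus r δ L) : 0 ≤ r := by
  refine le_trans ?_ H.hr
  have h1 := H.γ1
  have h2 := H.cp_pos
  have h3 : (0:ℝ) < 1 - β := by linarith [H.hβ1]
  have h4 := H.hδ
  positivity
lemma R_pos (H : Hyp β γ cplus cminus r δ L) : 0 < r + β * cplus * δ := by
  have := H.r_nonneg
  nlinarith [mul_pos (mul_pos H.hβ0 H.cp_pos) H.hδ]
lemma R_ge (H : Hyp β γ cplus cminus r δ L) :
    (1 - β * γ) * cplus * (δ / (1 - γ)) ≤ r + β * cplus * δ := by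
  have hg := H.γ1
  have hr := H.hr
  rw [div_le_iff₀ hg] at hr
  rw [show (1 - β * γ) * cplus * (δ / (1 - γ)) = (1 - β * γ) * cplus * δ / (1 - γ) by ring,
    div_le_iff₀ hg]
  nlinarith [H.cp_pos, H.hδ, H.hγ0]

end Hyp

lemma mu_zero : natThresh γ δ 0 = 0 := by simp [natThresh]

lemma mu_one : natThresh γ δ 1 = 0 := by simp [natThresh]

lemma mu_eq {l : ℕ} (hl : 1 ≤ l) : natThresh γ δ l = δ * ((l : ℝ) - 1) / (1 - γ) := by
  have : l ≠ 0 := by omega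
  simp [natThresh, this]

lemma mu_succ (hγ1 : γ < 1) {l : ℕ} (hl : 1 ≤ l) :
    natThresh γ δ (l + 1) = natThresh γ δ l + δ / (1 - γ) := by
  rw [mu_eq hl, mu_eq (by omega : 1 ≤ l + 1)]
  have h : (1:ℝ) - γ ≠ 0 := by linarith
  push_cast
  field_simp
  ring

lemma mu_diff (hγ1 : γ < 1) {a b : ℕ} (ha : 1 ≤ a) (hab : a ≤ b) :
    natThresh γ δ b - natThresh γ δ a = ((b : ℝ) - a) * (δ / (1 - γ)) := by
  rw [mu_eq ha, mu_eq (le_trans ha hab)]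
  have h : (1:ℝ) - γ ≠ 0 := by linarith
  field_simp
  ring

lemma mu_nonneg (hγ1 : γ < 1) (hδ : 0 ≤ δ) (l : ℕ) : 0 ≤ natThresh γ δ l := by
  rcases Nat.eq_zero_or_pos l with h | h
  · simp [h, mu_zero]
  · rw [mu_eq h]
    have h1 : (0:ℝ) ≤ (l : ℝ) - 1 := by
      have : (1:ℝ) ≤ (l:ℝ) := by exact_mod_cast h
      linarith
    have h2 : (0:ℝ) < 1 - γ := by linarith
    positivity

lemma mu_mono (hγ1 : γ < 1) (hδ : 0 ≤ δ) {a b : ℕ} (hab : a ≤ b) :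
    natThresh γ δ a ≤ natThresh γ δ b := by
  rcases Nat.eq_zero_or_pos a with h | h
  · rw [h, mu_zero]; exact mu_nonneg hγ1 hδ b
  · have hd := mu_diff (δ := δ) hγ1 h hab
    have h1 : (0:ℝ) ≤ (b : ℝ) - a := by
      have : (a:ℝ) ≤ (b:ℝ) := by exact_mod_cast hab
      linarith
    have h2 : (0:ℝ) < 1 - γ := by linarith
    have h3 : 0 ≤ ((b : ℝ) - a) * (δ / (1 - γ)) := mul_nonneg h1 (div_nonneg hδ h2.le)
    linarith

/-- The landing map `x ↦ γx + δj` fixes `μ (j+1)` and contracts by `γ`. -/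
lemma lan_eq (hγ1 : γ < 1) (j : ℕ) (x : ℝ) :
    γ * x + δ * (j : ℝ) = natThresh γ δ (j + 1) + γ * (x - natThresh γ δ (j + 1)) := by
  rw [mu_eq (by omega : 1 ≤ j + 1)]
  have h : (1:ℝ) - γ ≠ 0 := by linarith
  push_cast
  field_simp
  ring

lemma lan_le_muL (hγ0 : 0 ≤ γ) (hγ1 : γ < 1) (hδ : 0 ≤ δ) {j : ℕ} (hj : j + 1 ≤ L)
    {z : ℝ} (hzL : z ≤ natThresh γ δ L) : γ * z + δ * (j : ℝ) ≤ natThresh γ δ L := by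
  rw [lan_eq hγ1]
  have h1 : natThresh γ δ (j+1) ≤ natThresh γ δ L := mu_mono hγ1 hδ hj
  rcases le_total z (natThresh γ δ (j+1)) with h | h
  · nlinarith
  · nlinarith

lemma lan_nonneg (hγ0 : 0 ≤ γ) (hδ : 0 ≤ δ) {z : ℝ} (hz : 0 ≤ z) (j : ℕ) :
    0 ≤ γ * z + δ * (j : ℝ) := by positivity


/-! ### The constraint sets of the Bellman operator -/

noncomputable def relV (β γ cplus cminus r δ : ℝ) (F : ℕ → ℝ → ℝ) (l : ℕ) (xt u : ℝ) : ℝ :=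
  (1 - β * γ) * cplus * xt + cminus * u - (r + β * cplus * δ) * ((l : ℝ) - 2)
    + β * F (l - 1) (γ * xt + δ * ((l : ℝ) - 2))

noncomputable def stayV (β γ cplus cminus r δ : ℝ) (F : ℕ → ℝ → ℝ) (l : ℕ) (xt u : ℝ) : ℝ :=
  (1 - β * γ) * cplus * xt + cminus * u - (r + β * cplus * δ) * ((l : ℝ) - 1)
    + β * F l (γ * xt + δ * ((l : ℝ) - 1))

noncomputable def proV (β γ cplus cminus r δ : ℝ) (F : ℕ → ℝ → ℝ) (l : ℕ) (xt u : ℝ) : ℝ :=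
  (1 - β * γ) * cplus * xt + cminus * u - (r + β * cplus * δ) * (l : ℝ)
    + β * F (l + 1) (γ * xt + δ * (l : ℝ))

def BSet (β γ cplus cminus r δ : ℝ) (L : ℕ) (μ : ℕ → ℝ) (F : ℕ → ℝ → ℝ) (l : ℕ) (x : ℝ) :
    Set ℝ :=
  { v : ℝ |
    (∃ xt u : ℝ, x ≤ xt ∧ xt ≤ μ L ∧ 0 ≤ u ∧ 2 ≤ l ∧ xt + u < μ l ∧
      v = relV β γ cplus cminus r δ F l xt u) ∨
    (∃ xt u : ℝ, x ≤ xt ∧ xt ≤ μ L ∧ 0 ≤ u ∧ μ l ≤ xt + u ∧ (l < L → xt + u < μ (l + 1)) ∧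
      v = stayV β γ cplus cminus r δ F l xt u) ∨
    (∃ xt u : ℝ, x ≤ xt ∧ xt ≤ μ L ∧ 0 ≤ u ∧ l < L ∧ μ (l + 1) ≤ xt + u ∧
      v = proV β γ cplus cminus r δ F l xt u) }

lemma mlBell_eq (μ : ℕ → ℝ) (F : ℕ → ℝ → ℝ) (l : ℕ) (x : ℝ) :
    mlBell β γ cplus cminus r δ L μ F l x = sInf (BSet β γ cplus cminus r δ L μ F l x) := rfl

/-! ### csInf comparison helpers -/

lemma lb_le_sInf {S : Set ℝ} (hS : S.Nonempty) {b : ℝ} (h : ∀ v ∈ S, b ≤ v) : b ≤ sInf S :=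
  le_csInf hS h

lemma sInf_le_of_mem {S : Set ℝ} (hS : BddBelow S) {v : ℝ} (h : v ∈ S) : sInf S ≤ v :=
  csInf_le hS h

lemma sInf_le_sInf_add {S S' : Set ℝ} (hS : S.Nonempty) (hS' : BddBelow S') {ε : ℝ}
    (h : ∀ v ∈ S, ∃ w ∈ S', w ≤ v + ε) : sInf S' ≤ sInf S + ε := by
  have h1 : sInf S' - ε ≤ sInf S := by
    refine le_csInf hS fun v hv => ?_
    obtain ⟨w, hw, hle⟩ := h v hv
    have := csInf_le hS' hw
    linarith
  linarith

noncomputable def Tt (β γ cplus cminus r δ : ℝ) (L : ℕ) (F : ℕ → ℝ → ℝ) (l : ℕ) (x : ℝ) : ℝ :=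
  sInf (BSet β γ cplus cminus r δ L (natThresh γ δ) F l x)

lemma Tt_eq (F : ℕ → ℝ → ℝ) (l : ℕ) (x : ℝ) :
    mlBell β γ cplus cminus r δ L (natThresh γ δ) F l x = Tt β γ cplus cminus r δ L F l x := rfl

noncomputable def C0 (β γ cplus cminus r δ : ℝ) (L : ℕ) : ℝ :=
  ((r + β * cplus * δ) * ((L : ℝ) - 1)
    + ((1 - β * γ) * cplus + cminus) * natThresh γ δ L) / (1 - β)

lemma C0_nonneg (H : Hyp β γ cplus cminus r δ L) : 0 ≤ C0 β γ cplus cminus r δ L := by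
  have h1 := H.R_pos
  have h2 : (0:ℝ) ≤ (L:ℝ) - 1 := by
    have : (2:ℝ) ≤ (L:ℝ) := by exact_mod_cast H.hL
    linarith
  have h3 := mu_nonneg (δ := δ) H.hγ1 H.hδ.le L
  have h4 : 0 ≤ (1 - β * γ) * cplus + cminus := by nlinarith [H.c1_pos, H.hcm]
  have h5 : (0:ℝ) < 1 - β := by linarith [H.hβ1]
  have := mul_nonneg h1.le h2
  have := mul_nonneg h4 h3
  unfold C0
  positivity

/-- The invariant class of functions. -/
structure Good (β γ cplus cminus r δ : ℝ) (L : ℕ) (F : ℕ → ℝ → ℝ) : Prop where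
  mono : ∀ l, 1 ≤ l → l ≤ L → ∀ x y, 0 ≤ x → x ≤ y → y ≤ natThresh γ δ L → F l x ≤ F l y
  lip : ∀ l, 1 ≤ l → l ≤ L → ∀ x y, 0 ≤ x → x ≤ y → y ≤ natThresh γ δ L →
    F l y - F l x ≤ cplus * (y - x)
  flip : ∀ l k, l ≤ L → k < l → ∀ x y, natThresh γ δ (l - k - 1) ≤ x → x ≤ y →
    y ≤ natThresh γ δ (l - k) → F l y - F l x ≤ (1 - (β * γ) ^ k) * cplus * (y - x)
  const : ∀ l, 1 ≤ l → l < L → ∀ x, natThresh γ δ (l - 1) ≤ x → x ≤ natThresh γ δ (l + 1) →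
    F l x = F l (natThresh γ δ (l + 1))
  diag : ∀ l, 1 ≤ l → l < L → F (l + 1) (natThresh γ δ (l + 1)) ≤ F l (natThresh γ δ l)
  bdd : ∀ l, 1 ≤ l → l ≤ L → ∀ x, 0 ≤ x → x ≤ natThresh γ δ L →
    |F l x| ≤ C0 β γ cplus cminus r δ L

/-- Level-`l` value is constant on `[μ (l-1), μ l]` (depth-0 fine Lipschitz). -/
lemma Good.const0 {F : ℕ → ℝ → ℝ} (hF : Good β γ cplus cminus r δ L F)
    (H : Hyp β γ cplus cminus r δ L) {l : ℕ} (hl1 : 1 ≤ l) (hlL : l ≤ L) {x y : ℝ}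
    (hx : natThresh γ δ (l - 1) ≤ x) (hxy : x ≤ y) (hy : y ≤ natThresh γ δ l) :
    F l x = F l y := by
  have h1 := hF.flip l 0 hlL (by omega) x y (by simpa using hx) hxy (by simpa using hy)
  have h0 : 0 ≤ x := le_trans (mu_nonneg H.hγ1 H.hδ.le _) hx
  have h2 := hF.mono l hl1 hlL x y h0 hxy
    (le_trans hy (mu_mono H.hγ1 H.hδ.le hlL))
  simp at h1
  linarith [h2]

/-- Nonemptiness of the Bellman constraint set. -/
lemma BSet_nonempty (H : Hyp β γ cplus cminus r δ L) (F : ℕ → ℝ → ℝ) {l : ℕ} {x : ℝ}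
    (hl1 : 1 ≤ l) (hlL : l ≤ L) (hx : x ≤ natThresh γ δ L) :
    (BSet β γ cplus cminus r δ L (natThresh γ δ) F l x).Nonempty := by
  rcases lt_or_eq_of_le hlL with h | h
  · exact ⟨_, Or.inr (Or.inr ⟨x, max (natThresh γ δ (l+1) - x) 0, le_refl x, hx,
      le_max_right _ _, h, by
        rcases le_total (natThresh γ δ (l+1) - x) 0 with hh | hh
        · rw [max_eq_right hh]; linarith
        · rw [max_eq_left hh]; linarith, rfl⟩)⟩
  · subst h
    exact ⟨_, Or.inr (Or.inl ⟨natThresh γ δ l, 0, hx, le_refl _, le_refl _, by linarith,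
      by intro hc; omega, rfl⟩)⟩

/-- Lower bound for every element of the Bellman set. -/
lemma BSet_lower (H : Hyp β γ cplus cminus r δ L) {F : ℕ → ℝ → ℝ} {C : ℝ}
    (hC : ∀ a z, 1 ≤ a → a ≤ L → 0 ≤ z → z ≤ natThresh γ δ L → -C ≤ F a z)
    {l : ℕ} {x : ℝ} (hl1 : 1 ≤ l) (hlL : l ≤ L) (hx0 : 0 ≤ x) :
    ∀ v ∈ BSet β γ cplus cminus r δ L (natThresh γ δ) F l x,
      -((r + β * cplus * δ) * ((L : ℝ) - 1) + β * C) ≤ v := by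
  intro v hv
  have hR := H.R_pos
  have hc1 := H.c1_pos
  have hcm := H.hcm
  have hβ0 := H.hβ0
  have hlR : (l : ℝ) ≤ (L : ℝ) := by exact_mod_cast hlL
  have hl1R : (1 : ℝ) ≤ (l : ℝ) := by exact_mod_cast hl1
  obtain ⟨xt, u, hxt, hxtL, hu, hll, hcon, hveq⟩ | ⟨xt, u, hxt, hxtL, hu, hcon, hcon2, hveq⟩ |
    ⟨xt, u, hxt, hxtL, hu, hlL', hcon, hveq⟩ := hv
  · -- relegation
    have hl2R : (2 : ℝ) ≤ (l : ℝ) := by exact_mod_cast hll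
    have harg : ((l:ℝ) - 2) = ((l - 2 : ℕ) : ℝ) := by
      rw [Nat.cast_sub hll]; norm_num
    have hFlb : -C ≤ F (l - 1) (γ * xt + δ * ((l:ℝ) - 2)) := by
      rw [harg]
      refine hC _ _ (by omega) (by omega) (lan_nonneg H.hγ0.le H.hδ.le (le_trans hx0 hxt) _) ?_
      exact lan_le_muL H.hγ0.le H.hγ1 H.hδ.le (by omega) hxtL
    rw [hveq]
    unfold relV
    have h0xt : 0 ≤ xt := le_trans hx0 hxt
    nlinarith [mul_nonneg hc1.le h0xt, mul_nonneg hcm.le hu,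
      mul_le_mul_of_nonneg_left (by linarith : (l:ℝ) - 2 ≤ (L:ℝ) - 1) hR.le,
      mul_le_mul_of_nonneg_left hFlb hβ0.le]
  · -- staying
    have hFlb : -C ≤ F l (γ * xt + δ * ((l:ℝ) - 1)) := by
      have harg : ((l:ℝ) - 1) = ((l - 1 : ℕ) : ℝ) := by
        rw [Nat.cast_sub hl1]; norm_num
      rw [harg]
      refine hC _ _ hl1 hlL (lan_nonneg H.hγ0.le H.hδ.le (le_trans hx0 hxt) _) ?_
      exact lan_le_muL H.hγ0.le H.hγ1 H.hδ.le (by omega) hxtL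
    rw [hveq]
    unfold stayV
    have h0xt : 0 ≤ xt := le_trans hx0 hxt
    nlinarith [mul_nonneg hc1.le h0xt, mul_nonneg hcm.le hu,
      mul_le_mul_of_nonneg_left (by linarith : (l:ℝ) - 1 ≤ (L:ℝ) - 1) hR.le,
      mul_le_mul_of_nonneg_left hFlb hβ0.le]
  · -- promotion
    have hFlb : -C ≤ F (l + 1) (γ * xt + δ * (l:ℝ)) := by
      have harg : ((l:ℝ)) = (((l : ℕ)) : ℝ) := by norm_num
      refine hC _ _ (by omega) (by omega) (lan_nonneg H.hγ0.le H.hδ.le (le_trans hx0 hxt) _) ?_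
      exact lan_le_muL H.hγ0.le H.hγ1 H.hδ.le (by omega) hxtL
    rw [hveq]
    unfold proV
    have h0xt : 0 ≤ xt := le_trans hx0 hxt
    have hlLR : (l : ℝ) ≤ (L:ℝ) - 1 := by
      have : (l:ℝ) + 1 ≤ (L:ℝ) := by exact_mod_cast hlL'
      linarith
    nlinarith [mul_nonneg hc1.le h0xt, mul_nonneg hcm.le hu,
      mul_le_mul_of_nonneg_left hlLR hR.le,
      mul_le_mul_of_nonneg_left hFlb hβ0.le]

lemma BSet_bddBelow (H : Hyp β γ cplus cminus r δ L) {F : ℕ → ℝ → ℝ} {C : ℝ}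
    (hC : ∀ a z, 1 ≤ a → a ≤ L → 0 ≤ z → z ≤ natThresh γ δ L → -C ≤ F a z)
    {l : ℕ} {x : ℝ} (hl1 : 1 ≤ l) (hlL : l ≤ L) (hx0 : 0 ≤ x) :
    BddBelow (BSet β γ cplus cminus r δ L (natThresh γ δ) F l x) :=
  ⟨_, fun v hv => BSet_lower H hC hl1 hlL hx0 v hv⟩

/-- `T F` is monotone in `x`. -/
lemma Tt_mono (H : Hyp β γ cplus cminus r δ L) {F : ℕ → ℝ → ℝ} {C : ℝ}
    (hC : ∀ a z, 1 ≤ a → a ≤ L → 0 ≤ z → z ≤ natThresh γ δ L → -C ≤ F a z)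
    {l : ℕ} {x y : ℝ} (hl1 : 1 ≤ l) (hlL : l ≤ L) (hx0 : 0 ≤ x) (hxy : x ≤ y)
    (hy : y ≤ natThresh γ δ L) :
    Tt β γ cplus cminus r δ L F l x ≤ Tt β γ cplus cminus r δ L F l y := by
  refine csInf_le_csInf (BSet_bddBelow H hC hl1 hlL hx0) (BSet_nonempty H F hl1 hlL hy) ?_
  rintro v (⟨xt, u, h1, h⟩ | ⟨xt, u, h1, h⟩ | ⟨xt, u, h1, h⟩)
  · exact Or.inl ⟨xt, u, le_trans hxy h1, h⟩
  · exact Or.inr (Or.inl ⟨xt, u, le_trans hxy h1, h⟩)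
  · exact Or.inr (Or.inr ⟨xt, u, le_trans hxy h1, h⟩)

lemma mu_pred_le (hγ1 : γ < 1) (hδ : 0 ≤ δ) {l : ℕ} (hl : 1 ≤ l) :
    natThresh γ δ l ≤ natThresh γ δ (l - 1) + δ / (1 - γ) := by
  rcases Nat.lt_or_ge l 2 with h | h
  · interval_cases l
    simp [mu_one, mu_zero]
    exact div_nonneg hδ (by linarith)
  · have h1 : l - 1 + 1 = l := by omega
    have := mu_succ (δ := δ) hγ1 (by omega : 1 ≤ l - 1)
    rw [h1] at this
    linarith

lemma mu_gap2 (hγ1 : γ < 1) (hδ : 0 ≤ δ) {l : ℕ} (hl : 1 ≤ l) :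
    natThresh γ δ (l + 1) ≤ natThresh γ δ (l - 1) + 2 * (δ / (1 - γ)) := by
  have h1 := mu_pred_le (δ := δ) hγ1 hδ hl
  have h2 := mu_succ (δ := δ) hγ1 hl
  linarith

/-- The candidate constant value on the promotion region of level `l < L`. -/
noncomputable def Vs (β γ cplus cminus r δ : ℝ) (F : ℕ → ℝ → ℝ) (l : ℕ) : ℝ :=
  (1 - β * γ) * cplus * natThresh γ δ (l + 1) - (r + β * cplus * δ) * (l : ℝ)
    + β * F (l + 1) (natThresh γ δ (l + 1))

/-- The candidate constant value on the top region of level `L`. -/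
noncomputable def VsL (β γ cplus cminus r δ : ℝ) (L : ℕ) (F : ℕ → ℝ → ℝ) : ℝ :=
  (1 - β * γ) * cplus * natThresh γ δ L - (r + β * cplus * δ) * ((L : ℝ) - 1)
    + β * F L (natThresh γ δ L)

set_option maxHeartbeats 1000000 in
/-- Key lemma: `Vs l` is a lower bound for all one-step values from `x = μ (l-1)`. -/
lemma Vs_lb (H : Hyp β γ cplus cminus r δ L) {F : ℕ → ℝ → ℝ}
    (hF : Good β γ cplus cminus r δ L F) {l : ℕ} (hl1 : 1 ≤ l) (hlL : l < L) :
    ∀ v ∈ BSet β γ cplus cminus r δ L (natThresh γ δ) F l (natThresh γ δ (l - 1)),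
      Vs β γ cplus cminus r δ F l ≤ v := by
  intro v hv
  have hγ1 := H.hγ1
  have hδ0 := H.hδ.le
  have hγ0 := H.hγ0.le
  have hβ0 := H.hβ0.le
  have hc1 := H.c1_pos
  have hcm := H.hcm
  have hc1cm := H.c1_le_cm
  have hm : (0:ℝ) ≤ δ / (1 - γ) := div_nonneg hδ0 (by linarith)
  have hRm : (1 - β * γ) * cplus * (δ / (1 - γ)) ≤ r + β * cplus * δ := H.R_ge
  have hsucc : natThresh γ δ (l + 1) = natThresh γ δ l + δ / (1 - γ) := mu_succ hγ1 hl1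
  have hm01 : natThresh γ δ (l - 1) ≤ natThresh γ δ l := mu_mono hγ1 hδ0 (by omega)
  have hmu0 : 0 ≤ natThresh γ δ (l - 1) := mu_nonneg hγ1 hδ0 _
  have hdiag : F (l + 1) (natThresh γ δ (l + 1)) ≤ F l (natThresh γ δ l) := hF.diag l hl1 hlL
  have hesucc : (1 - β * γ) * cplus * natThresh γ δ (l + 1)
      = (1 - β * γ) * cplus * natThresh γ δ l + (1 - β * γ) * cplus * (δ / (1 - γ)) := by
    rw [hsucc]; ring
  obtain ⟨xt, u, hxt, hxtL, hu, hll, hcon, hveq⟩ | ⟨xt, u, hxt, hxtL, hu, hcon, hcon2, hveq⟩ |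
    ⟨xt, u, hxt, hxtL, hu, hlL', hcon, hveq⟩ := hv
  · -- relegation branch
    have hdiag2 : F l (natThresh γ δ l) ≤ F (l - 1) (natThresh γ δ (l - 1)) := by
      have h := hF.diag (l - 1) (by omega) (by omega)
      rwa [show l - 1 + 1 = l by omega] at h
    have hcast : ((l:ℝ) - 2) = ((l - 2 : ℕ) : ℝ) := by rw [Nat.cast_sub hll]; norm_num
    have hz : γ * xt + δ * ((l:ℝ) - 2)
        = natThresh γ δ (l - 1) + γ * (xt - natThresh γ δ (l - 1)) := by
      rw [hcast, lan_eq hγ1 (l - 2) xt, show l - 2 + 1 = l - 1 by omega]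
    have hzmem : natThresh γ δ (l - 1) ≤ γ * xt + δ * ((l:ℝ) - 2) := by
      rw [hz]
      have := mul_nonneg hγ0 (sub_nonneg.2 hxt)
      linarith
    have hzL : γ * xt + δ * ((l:ℝ) - 2) ≤ natThresh γ δ L := by
      rw [hcast]; exact lan_le_muL hγ0 hγ1 hδ0 (by omega) hxtL
    have hmono : F (l - 1) (natThresh γ δ (l - 1)) ≤ F (l - 1) (γ * xt + δ * ((l:ℝ) - 2)) :=
      hF.mono (l - 1) (by omega) (by omega) _ _ hmu0 hzmem hzL
    have hgap : natThresh γ δ (l + 1) ≤ natThresh γ δ (l - 1) + 2 * (δ / (1 - γ)) :=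
      mu_gap2 hγ1 hδ0 hl1
    rw [hveq]
    unfold relV Vs
    have f1 := mul_le_mul_of_nonneg_left (hdiag.trans (hdiag2.trans hmono)) hβ0
    have f2 := mul_nonneg hcm.le hu
    have f3 := mul_le_mul_of_nonneg_left hgap hc1.le
    have f4 := mul_le_mul_of_nonneg_left hxt hc1.le
    linarith [f1, f2, f3, f4, hRm]
  · -- staying branch
    have hcast : ((l:ℝ) - 1) = ((l - 1 : ℕ) : ℝ) := by rw [Nat.cast_sub hl1]; norm_num
    have hz : γ * xt + δ * ((l:ℝ) - 1)
        = natThresh γ δ l + γ * (xt - natThresh γ δ l) := by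
      rw [hcast, lan_eq hγ1 (l - 1) xt, show l - 1 + 1 = l by omega]
    have hzL : γ * xt + δ * ((l:ℝ) - 1) ≤ natThresh γ δ L := by
      rw [hcast]; exact lan_le_muL hγ0 hγ1 hδ0 (by omega) hxtL
    rw [hveq]
    unfold stayV Vs
    rcases le_total (natThresh γ δ l) xt with hcase | hcase
    · have hzmem : natThresh γ δ l ≤ γ * xt + δ * ((l:ℝ) - 1) := by
        rw [hz]
        have := mul_nonneg hγ0 (sub_nonneg.2 hcase)
        linarith
      have hmono : F l (natThresh γ δ l) ≤ F l (γ * xt + δ * ((l:ℝ) - 1)) :=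
        hF.mono l hl1 (by omega) _ _ (hmu0.trans hm01) hzmem hzL
      have f1 := mul_le_mul_of_nonneg_left (hdiag.trans hmono) hβ0
      have f2 := mul_nonneg hcm.le hu
      have f3 := mul_le_mul_of_nonneg_left hcase hc1.le
      linarith [f1, f2, f3, hRm, hesucc]
    · have hd : 0 ≤ natThresh γ δ l - xt := by linarith
      have hud : natThresh γ δ l - xt ≤ u := by linarith
      have hzlow : xt ≤ γ * xt + δ * ((l:ℝ) - 1) := by
        rw [hz]
        have := mul_nonneg (show (0:ℝ) ≤ 1 - γ by linarith) hd
        linarith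
      have hzup : γ * xt + δ * ((l:ℝ) - 1) ≤ natThresh γ δ l := by
        rw [hz]
        have := mul_nonneg hγ0 hd
        linarith
      have hconst : F l (γ * xt + δ * ((l:ℝ) - 1)) = F l (natThresh γ δ l) :=
        hF.const0 H hl1 (by omega) (le_trans hxt hzlow) hzup (le_refl _)
      rw [hconst]
      have f1 := mul_le_mul_of_nonneg_left hdiag hβ0
      have f2 := mul_le_mul_of_nonneg_left hud hcm.le
      have f3 := mul_le_mul_of_nonneg_right hc1cm hd
      linarith [f1, f2, f3, hRm, hesucc]
  · -- promotion branch
    have hz : γ * xt + δ * (l:ℝ)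
        = natThresh γ δ (l + 1) + γ * (xt - natThresh γ δ (l + 1)) := lan_eq hγ1 l xt
    have hzL : γ * xt + δ * (l:ℝ) ≤ natThresh γ δ L :=
      lan_le_muL hγ0 hγ1 hδ0 (by omega) hxtL
    rw [hveq]
    unfold proV Vs
    rcases le_total (natThresh γ δ (l + 1)) xt with hcase | hcase
    · have hzmem : natThresh γ δ (l + 1) ≤ γ * xt + δ * (l:ℝ) := by
        rw [hz]
        have := mul_nonneg hγ0 (sub_nonneg.2 hcase)
        linarith
      have hmono : F (l + 1) (natThresh γ δ (l + 1)) ≤ F (l + 1) (γ * xt + δ * (l:ℝ)) :=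
        hF.mono (l + 1) (by omega) (by omega) _ _ (mu_nonneg hγ1 hδ0 _) hzmem hzL
      have f1 := mul_le_mul_of_nonneg_left hmono hβ0
      have f2 := mul_nonneg hcm.le hu
      have f3 := mul_le_mul_of_nonneg_left hcase hc1.le
      linarith
    · have hd0 : 0 ≤ natThresh γ δ (l + 1) - xt := by linarith
      have hud : natThresh γ δ (l + 1) - xt ≤ u := by linarith
      have hgap : natThresh γ δ (l + 1) ≤ natThresh γ δ (l - 1) + 2 * (δ / (1 - γ)) :=
        mu_gap2 hγ1 hδ0 hl1
      have hd2m : natThresh γ δ (l + 1) - xt ≤ 2 * (δ / (1 - γ)) := by linarith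
      have hzup : γ * xt + δ * (l:ℝ) ≤ natThresh γ δ (l + 1) := by
        rw [hz]
        have := mul_nonneg hγ0 hd0
        linarith
      have hz0 : xt ≤ γ * xt + δ * (l:ℝ) := by
        rw [hz]
        have := mul_nonneg (show (0:ℝ) ≤ 1 - γ by linarith) hd0
        linarith
      have fd := mul_le_mul_of_nonneg_left hud hcm.le
      rcases le_total (natThresh γ δ l) (γ * xt + δ * (l:ℝ)) with hcc | hcc
      · have hconst : F (l + 1) (γ * xt + δ * (l:ℝ)) = F (l + 1) (natThresh γ δ (l + 1)) :=
          hF.const0 H (by omega) (by omega) (by simpa using hcc) hzup (le_refl _)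
        rw [hconst]
        have f3 := mul_le_mul_of_nonneg_right hc1cm hd0
        linarith
      · -- landing dips below μ l into the Lipschitz-1 region
        have hc2 : (1 + β * γ / 2) * ((1 - β * γ) * cplus) ≤ cminus := by
          linarith [H.hcm2]
        have hzlow : natThresh γ δ (l - 1) ≤ γ * xt + δ * (l:ℝ) := by
          rw [hz]
          have h1 := mul_nonneg (show (0:ℝ) ≤ 1 - γ by linarith)
            (sub_nonneg.2 (mu_mono (δ := δ) hγ1 hδ0 (show l - 1 ≤ l + 1 by omega)))
          have h2 := mul_nonneg hγ0 (sub_nonneg.2 hxt)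
          linarith
        have hconst : F (l + 1) (natThresh γ δ l) = F (l + 1) (natThresh γ δ (l + 1)) :=
          hF.const0 H (by omega) (by omega)
            (by simpa using (le_refl (natThresh γ δ l))) (by linarith) (le_refl _)
        have hflip := hF.flip (l + 1) 1 (by omega) (by omega) (γ * xt + δ * (l:ℝ))
          (natThresh γ δ l) (by simpa using hzlow) hcc (by simp)
        simp only [pow_one] at hflip
        rw [hconst] at hflip
        have e1 : natThresh γ δ l - (γ * xt + δ * (l:ℝ))
            = γ * (natThresh γ δ (l + 1) - xt) - δ / (1 - γ) := by
          rw [hz]; linarith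
        have hkey : (1 - β * γ) * cplus * (natThresh γ δ (l + 1) - xt)
            + β * ((1 - β * γ) * cplus * (natThresh γ δ l - (γ * xt + δ * (l:ℝ))))
            ≤ cminus * (natThresh γ δ (l + 1) - xt) := by
          rw [e1]
          have hγd : γ * (natThresh γ δ (l + 1) - xt) ≤ 2 * (δ / (1 - γ)) := by
            have h1 := mul_nonneg (show (0:ℝ) ≤ 1 - γ by linarith) hd0
            linarith
          have hp := mul_le_mul_of_nonneg_left hγd (show (0:ℝ) ≤ β / 2 by linarith)
          have h1 : β * (γ * (natThresh γ δ (l + 1) - xt) - δ / (1 - γ))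
              ≤ β * γ / 2 * (natThresh γ δ (l + 1) - xt) := by linarith
          have h2 := mul_le_mul_of_nonneg_left h1 hc1.le
          have h3 := mul_le_mul_of_nonneg_right hc2 hd0
          linarith [h2, h3]
        have f1 := mul_le_mul_of_nonneg_left hflip hβ0
        linarith [f1, fd, hkey]

set_option maxHeartbeats 1000000 in
/-- Top-level analogue of `Vs_lb`. -/
lemma VsL_lb (H : Hyp β γ cplus cminus r δ L) {F : ℕ → ℝ → ℝ}
    (hF : Good β γ cplus cminus r δ L F) :
    ∀ v ∈ BSet β γ cplus cminus r δ L (natThresh γ δ) F L (natThresh γ δ (L - 1)),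
      VsL β γ cplus cminus r δ L F ≤ v := by
  intro v hv
  have hγ1 := H.hγ1
  have hδ0 := H.hδ.le
  have hγ0 := H.hγ0.le
  have hβ0 := H.hβ0.le
  have hc1 := H.c1_pos
  have hcm := H.hcm
  have hc1cm := H.c1_le_cm
  have hL1 : 1 ≤ L := by have := H.hL; omega
  have hm : (0:ℝ) ≤ δ / (1 - γ) := div_nonneg hδ0 (by linarith)
  have hRm : (1 - β * γ) * cplus * (δ / (1 - γ)) ≤ r + β * cplus * δ := H.R_ge
  have hpred : natThresh γ δ L ≤ natThresh γ δ (L - 1) + δ / (1 - γ) := mu_pred_le hγ1 hδ0 hL1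
  have hm01 : natThresh γ δ (L - 1) ≤ natThresh γ δ L := mu_mono hγ1 hδ0 (by omega)
  have hmu0 : 0 ≤ natThresh γ δ (L - 1) := mu_nonneg hγ1 hδ0 _
  obtain ⟨xt, u, hxt, hxtL, hu, hll, hcon, hveq⟩ | ⟨xt, u, hxt, hxtL, hu, hcon, hcon2, hveq⟩ |
    ⟨xt, u, hxt, hxtL, hu, hlL', hcon, hveq⟩ := hv
  · -- relegation from the top level
    have hdiag : F L (natThresh γ δ L) ≤ F (L - 1) (natThresh γ δ (L - 1)) := by
      have h := hF.diag (L - 1) (by omega) (by omega)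
      rwa [show L - 1 + 1 = L by omega] at h
    have hcast : ((L:ℝ) - 2) = ((L - 2 : ℕ) : ℝ) := by rw [Nat.cast_sub hll]; norm_num
    have hz : γ * xt + δ * ((L:ℝ) - 2)
        = natThresh γ δ (L - 1) + γ * (xt - natThresh γ δ (L - 1)) := by
      rw [hcast, lan_eq hγ1 (L - 2) xt, show L - 2 + 1 = L - 1 by omega]
    have hzmem : natThresh γ δ (L - 1) ≤ γ * xt + δ * ((L:ℝ) - 2) := by
      rw [hz]
      have := mul_nonneg hγ0 (sub_nonneg.2 hxt)
      linarith
    have hzL : γ * xt + δ * ((L:ℝ) - 2) ≤ natThresh γ δ L := by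
      rw [hcast]; exact lan_le_muL hγ0 hγ1 hδ0 (by omega) hxtL
    have hmono : F (L - 1) (natThresh γ δ (L - 1)) ≤ F (L - 1) (γ * xt + δ * ((L:ℝ) - 2)) :=
      hF.mono (L - 1) (by omega) (by omega) _ _ hmu0 hzmem hzL
    rw [hveq]
    unfold relV VsL
    have f1 := mul_le_mul_of_nonneg_left (hdiag.trans hmono) hβ0
    have f2 := mul_nonneg hcm.le hu
    have f3 := mul_le_mul_of_nonneg_left hxt hc1.le
    have f4 := mul_le_mul_of_nonneg_left hpred hc1.le
    have hcast2 : ((L:ℝ) - 1) - ((L:ℝ) - 2) = 1 := by ring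
    linarith [f1, f2, f3, f4, hRm]
  · -- staying at the top level
    have hcast : ((L:ℝ) - 1) = ((L - 1 : ℕ) : ℝ) := by rw [Nat.cast_sub hL1]; norm_num
    have hz : γ * xt + δ * ((L:ℝ) - 1)
        = natThresh γ δ L + γ * (xt - natThresh γ δ L) := by
      rw [hcast, lan_eq hγ1 (L - 1) xt, show L - 1 + 1 = L by omega]
    have hd : 0 ≤ natThresh γ δ L - xt := by linarith
    have hzlow : xt ≤ γ * xt + δ * ((L:ℝ) - 1) := by
      rw [hz]
      have := mul_nonneg (show (0:ℝ) ≤ 1 - γ by linarith) hd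
      linarith
    have hzup : γ * xt + δ * ((L:ℝ) - 1) ≤ natThresh γ δ L := by
      rw [hz]
      have := mul_nonneg hγ0 hd
      linarith
    have hconst : F L (γ * xt + δ * ((L:ℝ) - 1)) = F L (natThresh γ δ L) :=
      hF.const0 H hL1 (le_refl L) (le_trans hxt hzlow) hzup (le_refl _)
    have hud : natThresh γ δ L - xt ≤ u := by linarith
    rw [hveq]
    unfold stayV VsL
    rw [hconst]
    have f2 := mul_le_mul_of_nonneg_left hud hcm.le
    have f3 := mul_le_mul_of_nonneg_right hc1cm hd
    linarith [f2, f3]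
  · omega

/-- From `Good.bdd`, a uniform lower bound usable for `BSet_lower`. -/
lemma Good.lb {F : ℕ → ℝ → ℝ} (hF : Good β γ cplus cminus r δ L F) :
    ∀ a z, 1 ≤ a → a ≤ L → 0 ≤ z → z ≤ natThresh γ δ L →
      -(C0 β γ cplus cminus r δ L) ≤ F a z :=
  fun a z h1 h2 h3 h4 => (abs_le.1 (hF.bdd a h1 h2 z h3 h4)).1

/-- On the promotion region `[μ (l-1), μ (l+1)]` of a level `l < L`,
`T F` is constant with value `Vs l`. -/
lemma Tt_eq_Vs (H : Hyp β γ cplus cminus r δ L) {F : ℕ → ℝ → ℝ}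
    (hF : Good β γ cplus cminus r δ L F) {l : ℕ} (hl1 : 1 ≤ l) (hlL : l < L) {x : ℝ}
    (hx1 : natThresh γ δ (l - 1) ≤ x) (hx2 : x ≤ natThresh γ δ (l + 1)) :
    Tt β γ cplus cminus r δ L F l x = Vs β γ cplus cminus r δ F l := by
  have hγ1 := H.hγ1
  have hδ0 := H.hδ.le
  have hmuL : natThresh γ δ (l + 1) ≤ natThresh γ δ L := mu_mono hγ1 hδ0 (by omega)
  have hx0 : 0 ≤ x := le_trans (mu_nonneg hγ1 hδ0 _) hx1
  refine le_antisymm ?_ ?_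
  · -- upper: the promotion action (μ (l+1), 0) is feasible from x
    have hfix : γ * natThresh γ δ (l + 1) + δ * (l:ℝ) = natThresh γ δ (l + 1) := by
      rw [lan_eq hγ1 l (natThresh γ δ (l + 1))]; ring
    have hmem : Vs β γ cplus cminus r δ F l
        ∈ BSet β γ cplus cminus r δ L (natThresh γ δ) F l x := by
      refine Or.inr (Or.inr ⟨natThresh γ δ (l + 1), 0, hx2, hmuL, le_refl 0, hlL,
        by linarith, ?_⟩)
      unfold Vs proV
      rw [hfix]
      ring
    exact sInf_le_of_mem (BSet_bddBelow H hF.lb hl1 (le_of_lt hlL) hx0) hmem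
  · -- lower: every feasible value from x is also feasible from μ (l-1)
    refine lb_le_sInf (BSet_nonempty H F hl1 (le_of_lt hlL) (le_trans hx2 hmuL)) ?_
    intro v hv
    refine Vs_lb H hF hl1 hlL v ?_
    obtain ⟨xt, u, h1, h⟩ | ⟨xt, u, h1, h⟩ | ⟨xt, u, h1, h⟩ := hv
    · exact Or.inl ⟨xt, u, le_trans hx1 h1, h⟩
    · exact Or.inr (Or.inl ⟨xt, u, le_trans hx1 h1, h⟩)
    · exact Or.inr (Or.inr ⟨xt, u, le_trans hx1 h1, h⟩)

/-- On `[μ (L-1), μ L]`, `T F` is constant with value `VsL`. -/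
lemma Tt_eq_VsL (H : Hyp β γ cplus cminus r δ L) {F : ℕ → ℝ → ℝ}
    (hF : Good β γ cplus cminus r δ L F) {x : ℝ}
    (hx1 : natThresh γ δ (L - 1) ≤ x) (hx2 : x ≤ natThresh γ δ L) :
    Tt β γ cplus cminus r δ L F L x = VsL β γ cplus cminus r δ L F := by
  have hγ1 := H.hγ1
  have hδ0 := H.hδ.le
  have hL1 : 1 ≤ L := by have := H.hL; omega
  have hx0 : 0 ≤ x := le_trans (mu_nonneg hγ1 hδ0 _) hx1
  refine le_antisymm ?_ ?_
  · have hcast : ((L:ℝ) - 1) = ((L - 1 : ℕ) : ℝ) := by rw [Nat.cast_sub hL1]; norm_num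
    have hfix : γ * natThresh γ δ L + δ * ((L:ℝ) - 1) = natThresh γ δ L := by
      rw [hcast, lan_eq hγ1 (L - 1) (natThresh γ δ L), show L - 1 + 1 = L by omega]; ring
    have hmem : VsL β γ cplus cminus r δ L F
        ∈ BSet β γ cplus cminus r δ L (natThresh γ δ) F L x := by
      refine Or.inr (Or.inl ⟨natThresh γ δ L, 0, hx2, le_refl _, le_refl 0,
        by linarith, by intro hc; omega, ?_⟩)
      unfold VsL stayV
      rw [hfix]
      ring
    exact sInf_le_of_mem (BSet_bddBelow H hF.lb hL1 (le_refl L) hx0) hmem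
  · refine lb_le_sInf (BSet_nonempty H F hL1 (le_refl L) hx2) ?_
    intro v hv
    refine VsL_lb H hF v ?_
    obtain ⟨xt, u, h1, h⟩ | ⟨xt, u, h1, h⟩ | ⟨xt, u, h1, h⟩ := hv
    · exact Or.inl ⟨xt, u, le_trans hx1 h1, h⟩
    · exact Or.inr (Or.inl ⟨xt, u, le_trans hx1 h1, h⟩)
    · exact Or.inr (Or.inr ⟨xt, u, le_trans hx1 h1, h⟩)

/-- `F a` is `(1-t^(j-1)) c⁺`-Lipschitz on the union `[μ (a-j), μ a]`. -/
lemma Good.lipUnion {F : ℕ → ℝ → ℝ} (hF : Good β γ cplus cminus r δ L F)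
    (H : Hyp β γ cplus cminus r δ L) {a j : ℕ} (haL : a ≤ L) (hj1 : 1 ≤ j) (hja : j ≤ a) :
    ∀ x y, natThresh γ δ (a - j) ≤ x → x ≤ y → y ≤ natThresh γ δ a →
      F a y - F a x ≤ (1 - (β * γ) ^ (j - 1)) * cplus * (y - x) := by
  induction j with
  | zero => omega
  | succ n ih =>
    intro x y hx hxy hy
    rcases Nat.eq_zero_or_pos n with hn | hn
    · subst hn
      simpa using hF.flip a 0 haL (by omega) x y (by simpa using hx) hxy (by simpa using hy)
    · have hmono : (β * γ) ^ n ≤ (β * γ) ^ (n - 1) :=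
        pow_le_pow_of_le_one H.t_pos.le H.t_lt1.le (by omega)
      have hsimp : n + 1 - 1 = n := by omega
      rw [hsimp]
      rcases le_total y (natThresh γ δ (a - n)) with hcase | hcase
      · have := hF.flip a n haL (by omega) x y
          (by rwa [show a - n - 1 = a - (n+1) by omega]) hxy hcase
        linarith
      · rcases le_total x (natThresh γ δ (a - n)) with hc2 | hc2
        · have h1 := ih (by omega) (by omega) (natThresh γ δ (a - n)) y (le_refl _) hcase hy
          have h2 := hF.flip a n haL (by omega) x (natThresh γ δ (a - n))
            (by rwa [show a - n - 1 = a - (n+1) by omega]) hc2 (le_refl _)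
          have h3 : (1 - (β * γ) ^ (n - 1)) * cplus * (y - natThresh γ δ (a - n))
              ≤ (1 - (β * γ) ^ n) * cplus * (y - natThresh γ δ (a - n)) := by
            have := mul_nonneg (sub_nonneg.2 hcase) H.cp_pos.le
            nlinarith
          linarith
        · have h1 := ih (by omega) (by omega) x y hc2 hxy hy
          have h3 : (1 - (β * γ) ^ (n - 1)) * cplus * (y - x)
              ≤ (1 - (β * γ) ^ n) * cplus * (y - x) := by
            have := mul_nonneg (sub_nonneg.2 hxy) H.cp_pos.le
            nlinarith
          linarith

/-- Chaining a per-interval Lipschitz bound to the whole domain `[0, μ L]`. -/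
lemma lip_chain (H : Hyp β γ cplus cminus r δ L) {f : ℝ → ℝ} {K : ℝ} (hK : 0 ≤ K)
    (hloc : ∀ j, 1 ≤ j → j < L → ∀ x y, natThresh γ δ j ≤ x → x ≤ y →
      y ≤ natThresh γ δ (j + 1) → f y - f x ≤ K * (y - x)) :
    ∀ x y, 0 ≤ x → x ≤ y → y ≤ natThresh γ δ L → f y - f x ≤ K * (y - x) := by
  have key : ∀ n, 1 ≤ n → n ≤ L → ∀ x y, 0 ≤ x → x ≤ y → y ≤ natThresh γ δ n →
      f y - f x ≤ K * (y - x) := by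
    intro n
    induction n with
    | zero => omega
    | succ n ih =>
      intro _ hnL x y hx0 hxy hy
      rcases Nat.eq_zero_or_pos n with hn | hn
      · subst hn
        rw [mu_one] at hy
        have hxy' : x = y := le_antisymm hxy (by linarith)
        subst hxy'
        simp
      · rcases le_total y (natThresh γ δ n) with hc | hc
        · exact ih hn (by omega) x y hx0 hxy hc
        · rcases le_total x (natThresh γ δ n) with hc2 | hc2
          · have h1 := hloc n hn (by omega) (natThresh γ δ n) y (le_refl _) hc hy
            have h2 := ih hn (by omega) x (natThresh γ δ n) hx0 hc2 (le_refl _)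
            linarith
          · exact hloc n hn (by omega) x y hc2 hxy hy
  exact key L (by have := H.hL; omega) (le_refl L)

set_option maxHeartbeats 2000000 in
/-- Fine Lipschitz invariance: depth-`k` estimate for `T F`. -/
lemma Tt_flip (H : Hyp β γ cplus cminus r δ L) {F : ℕ → ℝ → ℝ}
    (hF : Good β γ cplus cminus r δ L F) {l k : ℕ} (hlL : l ≤ L) (hk1 : 1 ≤ k) (hkl : k < l)
    {x y : ℝ} (hx : natThresh γ δ (l - k - 1) ≤ x) (hxy : x ≤ y)
    (hy : y ≤ natThresh γ δ (l - k)) :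
    Tt β γ cplus cminus r δ L F l y - Tt β γ cplus cminus r δ L F l x
      ≤ (1 - (β * γ) ^ k) * cplus * (y - x) := by
  have hγ1 := H.hγ1
  have hδ0 := H.hδ.le
  have hγ0 := H.hγ0.le
  have hβ0 := H.hβ0.le
  have hcp := H.cp_pos
  have hcm := H.hcm
  have htk1 : (β * γ) ^ k ≤ 1 := pow_le_one₀ H.t_pos.le H.t_lt1.le
  have hcoef : 0 ≤ (1 - (β * γ) ^ k) * cplus := mul_nonneg (by linarith) hcp.le
  have hεpos : 0 ≤ (1 - (β * γ) ^ k) * cplus * (y - x) := mul_nonneg hcoef (by linarith)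
  rcases Nat.lt_or_ge (l - k) 2 with hdeg | hdeg
  · -- degenerate interval [μ 0, μ 1] = {0}
    have hlk : l - k = 1 := by omega
    have hy0 : y ≤ 0 := by rw [hlk, mu_one] at hy; exact hy
    have hx0 : 0 ≤ x := by rw [show l - k - 1 = 0 by omega, mu_zero] at hx; exact hx
    have hh : x = y := le_antisymm hxy (by linarith)
    subst hh
    simp
  -- main case: the interval has positive length
  have hxmuL : x ≤ natThresh γ δ L := le_trans (le_trans hxy hy) (mu_mono hγ1 hδ0 (by omega))
  have hymuL : y ≤ natThresh γ δ L := le_trans hy (mu_mono hγ1 hδ0 (by omega))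
  have hy0 : 0 ≤ y := le_trans (le_trans (mu_nonneg hγ1 hδ0 _) hx) hxy
  have hm0 : (0:ℝ) ≤ δ / (1 - γ) := div_nonneg hδ0 (by linarith)
  have hgapxy : y - x ≤ δ / (1 - γ) := by
    have h := mu_succ (δ := δ) hγ1 (show 1 ≤ l - k - 1 by omega)
    rw [show l - k - 1 + 1 = l - k by omega] at h
    linarith
  have hkm : δ / (1 - γ) ≤ natThresh γ δ l - natThresh γ δ (l - k) := by
    have h := mu_diff (δ := δ) hγ1 (show 1 ≤ l - k by omega) (show l - k ≤ l by omega)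
    have hcast : ((l:ℝ) - ((l - k : ℕ):ℝ)) = (k:ℝ) := by
      rw [Nat.cast_sub (show k ≤ l by omega)]; ring
    rw [hcast] at h
    have hk1' : (1:ℝ) ≤ (k:ℝ) := by exact_mod_cast hk1
    have := mul_nonneg (sub_nonneg.2 hk1') hm0
    nlinarith
  have hkm1 : δ / (1 - γ) ≤ natThresh γ δ (l + 1) - natThresh γ δ (l - k) := by
    have h := mu_succ (δ := δ) hγ1 (show 1 ≤ l by omega)
    linarith
  have e := pow_succ' (β * γ) (k - 1)
  rw [show k - 1 + 1 = k by omega] at e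
  unfold Tt
  rw [sub_le_iff_le_add']
  refine sInf_le_sInf_add (BSet_nonempty H F (by omega) hlL hxmuL)
    (BSet_bddBelow H hF.lb (by omega) hlL hy0) ?_
  intro v hv
  obtain ⟨xt, u, hxt, hxtL, hu, hll, hcon, hveq⟩ | ⟨xt, u, hxt, hxtL, hu, hcon, hcon2, hveq⟩ |
    ⟨xt, u, hxt, hxtL, hu, hlL', hcon, hveq⟩ := hv
  · -- relegation
    rcases le_total y xt with hyx | hyx
    · exact ⟨v, Or.inl ⟨xt, u, hyx, hxtL, hu, hll, hcon, hveq⟩, by linarith⟩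
    · have hylm : y ≤ natThresh γ δ (l - 1) := le_trans hy (mu_mono hγ1 hδ0 (by omega))
      have hmul : natThresh γ δ (l - 1) < natThresh γ δ l := by
        have h := mu_succ (δ := δ) hγ1 (show 1 ≤ l - 1 by omega)
        rw [show l - 1 + 1 = l by omega] at h
        have : (0:ℝ) < δ / (1 - γ) := div_pos H.hδ (by linarith)
        linarith
      refine ⟨relV β γ cplus cminus r δ F l y (max (u - (y - xt)) 0),
        Or.inl ⟨y, max (u - (y - xt)) 0, le_refl y, hymuL, le_max_right _ _, hll, ?_, rfl⟩, ?_⟩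
      · rcases max_cases (u - (y - xt)) 0 with ⟨hmx, _⟩ | ⟨hmx, _⟩ <;> rw [hmx]
        · linarith
        · linarith
      · rw [hveq]
        unfold relV
        have hcast : ((l:ℝ) - 2) = ((l - 2 : ℕ) : ℝ) := by rw [Nat.cast_sub hll]; norm_num
        have hzx : γ * xt + δ * ((l:ℝ) - 2)
            = natThresh γ δ (l - 1) + γ * (xt - natThresh γ δ (l - 1)) := by
          rw [hcast, lan_eq hγ1 (l - 2) xt, show l - 2 + 1 = l - 1 by omega]
        have hzy : γ * y + δ * ((l:ℝ) - 2)
            = natThresh γ δ (l - 1) + γ * (y - natThresh γ δ (l - 1)) := by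
          rw [hcast, lan_eq hγ1 (l - 2) y, show l - 2 + 1 = l - 1 by omega]
        have hzxlow : natThresh γ δ (l - 1 - k) ≤ γ * xt + δ * ((l:ℝ) - 2) := by
          rw [show l - 1 - k = l - k - 1 by omega, hzx]
          have h1 := mul_nonneg (show (0:ℝ) ≤ 1 - γ by linarith)
            (sub_nonneg.2 (mu_mono (δ := δ) hγ1 hδ0 (show l - k - 1 ≤ l - 1 by omega)))
          have h2 := mul_nonneg hγ0 (sub_nonneg.2 (le_trans hx hxt))
          linarith
        have hzyup : γ * y + δ * ((l:ℝ) - 2) ≤ natThresh γ δ (l - 1) := by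
          rw [hzy]
          linarith [mul_nonneg hγ0 (sub_nonneg.2 hylm)]
        have hzxy : γ * xt + δ * ((l:ℝ) - 2) ≤ γ * y + δ * ((l:ℝ) - 2) := by
          linarith [mul_le_mul_of_nonneg_left hyx hγ0]
        have hlip := hF.lipUnion H (a := l - 1) (j := k) (by omega) hk1 (by omega)
          (γ * xt + δ * ((l:ℝ) - 2)) (γ * y + δ * ((l:ℝ) - 2)) hzxlow hzxy hzyup
        have f1 := mul_le_mul_of_nonneg_left hlip hβ0
        have fcm : cminus * max (u - (y - xt)) 0 ≤ cminus * u :=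
          mul_le_mul_of_nonneg_left (max_le (by linarith) hu) hcm.le
        have fε : (1 - (β * γ) ^ k) * cplus * (y - xt)
            ≤ (1 - (β * γ) ^ k) * cplus * (y - x) :=
          mul_le_mul_of_nonneg_left (by linarith) hcoef
        rw [e] at fε ⊢
        linarith [f1, fcm, fε]
  · -- staying
    rcases le_total y xt with hyx | hyx
    · exact ⟨v, Or.inr (Or.inl ⟨xt, u, hyx, hxtL, hu, hcon, hcon2, hveq⟩), by linarith⟩
    · have hxtb : xt ≤ natThresh γ δ (l - k) := le_trans hyx hy
      have hu0 : 0 ≤ u - (y - xt) := by linarith [hcon, hkm, hy]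
      refine ⟨stayV β γ cplus cminus r δ F l y (u - (y - xt)),
        Or.inr (Or.inl ⟨y, u - (y - xt), le_refl y, hymuL, hu0, by linarith,
          fun hlt => by linarith [hcon2 hlt], rfl⟩), ?_⟩
      rw [hveq]
      unfold stayV
      have hcast : ((l:ℝ) - 1) = ((l - 1 : ℕ) : ℝ) := by
        rw [Nat.cast_sub (by omega : 1 ≤ l)]; norm_num
      have hzx : γ * xt + δ * ((l:ℝ) - 1)
          = natThresh γ δ l + γ * (xt - natThresh γ δ l) := by
        rw [hcast, lan_eq hγ1 (l - 1) xt, show l - 1 + 1 = l by omega]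
      have hzy : γ * y + δ * ((l:ℝ) - 1)
          = natThresh γ δ l + γ * (y - natThresh γ δ l) := by
        rw [hcast, lan_eq hγ1 (l - 1) y, show l - 1 + 1 = l by omega]
      have hxtmul : xt ≤ natThresh γ δ l := le_trans hxtb (mu_mono hγ1 hδ0 (by omega))
      have hymul : y ≤ natThresh γ δ l := le_trans hy (mu_mono hγ1 hδ0 (by omega))
      have hzxlow : natThresh γ δ (l - (k + 1)) ≤ γ * xt + δ * ((l:ℝ) - 1) := by
        rw [show l - (k + 1) = l - k - 1 by omega, hzx]
        have h1 := mul_nonneg (show (0:ℝ) ≤ 1 - γ by linarith)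
          (sub_nonneg.2 hxtmul)
        linarith [le_trans hx hxt]
      have hzyup : γ * y + δ * ((l:ℝ) - 1) ≤ natThresh γ δ l := by
        rw [hzy]
        linarith [mul_nonneg hγ0 (sub_nonneg.2 hymul)]
      have hzxy : γ * xt + δ * ((l:ℝ) - 1) ≤ γ * y + δ * ((l:ℝ) - 1) := by
        linarith [mul_le_mul_of_nonneg_left hyx hγ0]
      have hlip := hF.lipUnion H (a := l) (j := k + 1) hlL (by omega) (by omega)
        (γ * xt + δ * ((l:ℝ) - 1)) (γ * y + δ * ((l:ℝ) - 1)) hzxlow hzxy hzyup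
      rw [show k + 1 - 1 = k by omega] at hlip
      have f1 := mul_le_mul_of_nonneg_left hlip hβ0
      have hcmk : (1 - β * γ) * cplus * ((β * γ) ^ k) ≤ cminus := by
        have h1 : (1 - β * γ) * cplus * ((β * γ) ^ k) ≤ (1 - β * γ) * cplus * 1 :=
          mul_le_mul_of_nonneg_left htk1 H.c1_pos.le
        have h2 : (0:ℝ) ≤ β * γ / 2 * ((1 - β * γ) * cplus) := by
          have := H.t_pos.le
          have := H.c1_pos.le
          positivity
        nlinarith [H.hcm2]
      have hcmk' : (1 - β * γ) * cplus + β * γ * ((1 - (β * γ) ^ k) * cplus)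
          ≤ (1 - (β * γ) ^ k) * cplus + cminus := by nlinarith [hcmk]
      have f2 := mul_le_mul_of_nonneg_right hcmk' (sub_nonneg.2 hyx)
      have fε : (1 - (β * γ) ^ k) * cplus * (y - xt)
          ≤ (1 - (β * γ) ^ k) * cplus * (y - x) :=
        mul_le_mul_of_nonneg_left (by linarith) hcoef
      nlinarith [f1, f2, fε]
  · -- promotion
    rcases le_total y xt with hyx | hyx
    · exact ⟨v, Or.inr (Or.inr ⟨xt, u, hyx, hxtL, hu, hlL', hcon, hveq⟩), by linarith⟩
    · have hxtb : xt ≤ natThresh γ δ (l - k) := le_trans hyx hy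
      have hu0 : 0 ≤ u - (y - xt) := by linarith [hcon, hkm1, hy]
      refine ⟨proV β γ cplus cminus r δ F l y (u - (y - xt)),
        Or.inr (Or.inr ⟨y, u - (y - xt), le_refl y, hymuL, hu0, hlL', by linarith, rfl⟩), ?_⟩
      rw [hveq]
      unfold proV
      have hzx : γ * xt + δ * (l:ℝ)
          = natThresh γ δ (l + 1) + γ * (xt - natThresh γ δ (l + 1)) := lan_eq hγ1 l xt
      have hzy : γ * y + δ * (l:ℝ)
          = natThresh γ δ (l + 1) + γ * (y - natThresh γ δ (l + 1)) := lan_eq hγ1 l y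
      have hxtmul : xt ≤ natThresh γ δ (l + 1) := le_trans hxtb (mu_mono hγ1 hδ0 (by omega))
      have hymul : y ≤ natThresh γ δ (l + 1) := le_trans hy (mu_mono hγ1 hδ0 (by omega))
      have hzxlow : natThresh γ δ (l + 1 - (k + 2)) ≤ γ * xt + δ * (l:ℝ) := by
        rw [show l + 1 - (k + 2) = l - k - 1 by omega, hzx]
        have h1 := mul_nonneg (show (0:ℝ) ≤ 1 - γ by linarith)
          (sub_nonneg.2 hxtmul)
        linarith [le_trans hx hxt]
      have hzyup : γ * y + δ * (l:ℝ) ≤ natThresh γ δ (l + 1) := by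
        rw [hzy]
        linarith [mul_nonneg hγ0 (sub_nonneg.2 hymul)]
      have hzxy : γ * xt + δ * (l:ℝ) ≤ γ * y + δ * (l:ℝ) := by
        linarith [mul_le_mul_of_nonneg_left hyx hγ0]
      have hlip := hF.lipUnion H (a := l + 1) (j := k + 2) (by omega) (by omega) (by omega)
        (γ * xt + δ * (l:ℝ)) (γ * y + δ * (l:ℝ)) hzxlow hzxy hzyup
      rw [show k + 2 - 1 = k + 1 by omega] at hlip
      have f1 := mul_le_mul_of_nonneg_left hlip hβ0
      have e2 : (β * γ) ^ (k + 1) = (β * γ) * (β * γ) ^ k := pow_succ' (β * γ) k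
      rw [e2] at f1
      have hcmk : (β * γ) ^ k * ((1 - (β * γ) ^ 2) * cplus) ≤ cminus := by
        have htk : (β * γ) ^ k ≤ β * γ := by
          have := pow_le_pow_of_le_one H.t_pos.le H.t_lt1.le hk1
          simpa using this
        have h2 : (0:ℝ) ≤ (1 - (β * γ) ^ 2) * cplus := by
          have ht2 : (β * γ) ^ 2 ≤ 1 := pow_le_one₀ H.t_pos.le H.t_lt1.le
          exact mul_nonneg (by linarith) hcp.le
        have h3 := mul_le_mul_of_nonneg_right htk h2
        have h4 : β * γ * ((1 - (β * γ) ^ 2) * cplus) ≤ cminus := by nlinarith [H.hcm3]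
        linarith
      have hcmk' : (1 - β * γ) * cplus + β * γ * ((1 - (β * γ) * (β * γ) ^ k) * cplus)
          ≤ (1 - (β * γ) ^ k) * cplus + cminus := by nlinarith [hcmk]
      have f2 := mul_le_mul_of_nonneg_right hcmk' (sub_nonneg.2 hyx)
      have fε : (1 - (β * γ) ^ k) * cplus * (y - xt)
          ≤ (1 - (β * γ) ^ k) * cplus * (y - x) :=
        mul_le_mul_of_nonneg_left (by linarith) hcoef
      nlinarith [f1, f2, fε]

set_option maxHeartbeats 2000000 in
/-- Per-interval global Lipschitz estimate for `T F`. -/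
lemma Tt_lip_loc (H : Hyp β γ cplus cminus r δ L) {F : ℕ → ℝ → ℝ}
    (hF : Good β γ cplus cminus r δ L F) {l j : ℕ} (hl1 : 1 ≤ l) (hlL : l ≤ L)
    (hj1 : 1 ≤ j) (hjL : j < L) {x y : ℝ} (hx : natThresh γ δ j ≤ x) (hxy : x ≤ y)
    (hy : y ≤ natThresh γ δ (j + 1)) :
    Tt β γ cplus cminus r δ L F l y - Tt β γ cplus cminus r δ L F l x ≤ cplus * (y - x) := by
  have hγ1 := H.hγ1
  have hδ0 := H.hδ.le
  have hγ0 := H.hγ0.le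
  have hβ0 := H.hβ0.le
  have hcp := H.cp_pos
  have hcm := H.hcm
  have hc1 := H.c1_pos
  have hR := H.R_pos
  have hm0 : (0:ℝ) < δ / (1 - γ) := div_pos H.hδ (by linarith)
  have hymuL : y ≤ natThresh γ δ L := le_trans hy (mu_mono hγ1 hδ0 (by omega))
  have hxmuL : x ≤ natThresh γ δ L := le_trans hxy hymuL
  have hx0 : 0 ≤ x := le_trans (mu_nonneg hγ1 hδ0 _) hx
  have hy0 : 0 ≤ y := le_trans hx0 hxy
  have hεpos : 0 ≤ cplus * (y - x) := mul_nonneg hcp.le (by linarith)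
  have htcp : β * γ * cplus ≤ cplus := by nlinarith [H.t_pos, H.t_lt1]
  unfold Tt
  rw [sub_le_iff_le_add']
  refine sInf_le_sInf_add (BSet_nonempty H F hl1 hlL hxmuL)
    (BSet_bddBelow H hF.lb hl1 hlL hy0) ?_
  intro v hv
  obtain ⟨xt, u, hxt, hxtL, hu, hll, hcon, hveq⟩ | ⟨xt, u, hxt, hxtL, hu, hcon, hcon2, hveq⟩ |
    ⟨xt, u, hxt, hxtL, hu, hlL', hcon, hveq⟩ := hv
  · -- relegation
    rcases le_total y xt with hyx | hyx
    · exact ⟨v, Or.inl ⟨xt, u, hyx, hxtL, hu, hll, hcon, hveq⟩, by linarith⟩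
    · have hcast : ((l:ℝ) - 2) = ((l - 2 : ℕ) : ℝ) := by rw [Nat.cast_sub hll]; norm_num
      have hz0 : 0 ≤ γ * xt + δ * ((l:ℝ) - 2) := by
        rw [hcast]; exact lan_nonneg hγ0 hδ0 (le_trans hx0 hxt) _
      have hzL : γ * y + δ * ((l:ℝ) - 2) ≤ natThresh γ δ L := by
        rw [hcast]; exact lan_le_muL hγ0 hγ1 hδ0 (by omega) hymuL
      have hzxy : γ * xt + δ * ((l:ℝ) - 2) ≤ γ * y + δ * ((l:ℝ) - 2) := by
        linarith [mul_le_mul_of_nonneg_left hyx hγ0]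
      have hlip := hF.lip (l - 1) (by omega) (by omega) _ _ hz0 hzxy hzL
      have f1 := mul_le_mul_of_nonneg_left hlip hβ0
      rcases le_total (y - xt) u with hA | hA
      · -- shift the improvement budget
        refine ⟨relV β γ cplus cminus r δ F l y (u - (y - xt)),
          Or.inl ⟨y, u - (y - xt), le_refl y, hymuL, by linarith, hll, by linarith, rfl⟩, ?_⟩
        rw [hveq]
        unfold relV
        have f2 := mul_le_mul_of_nonneg_left hyx hcp.le
        linarith [f1, mul_nonneg hcm.le (show (0:ℝ) ≤ y - xt by linarith),
          mul_le_mul_of_nonneg_left (show y - xt ≤ y - x by linarith) hcp.le]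
      · -- u is exhausted
        rcases lt_or_ge y (natThresh γ δ l) with hyl | hyl
        · refine ⟨relV β γ cplus cminus r δ F l y 0,
            Or.inl ⟨y, 0, le_refl y, hymuL, le_refl 0, hll, by linarith, rfl⟩, ?_⟩
          rw [hveq]
          unfold relV
          linarith [f1, mul_nonneg hcm.le hu,
            mul_le_mul_of_nonneg_left (show y - xt ≤ y - x by linarith) hcp.le]
        · -- y = μ l and j = l - 1 : switch to the staying action (μ l, 0)
          have hjl : j + 1 = l := by
            by_contra hne
            rcases Nat.lt_or_ge (j + 1) l with hc | hc
            · have h1 : natThresh γ δ (j + 1) ≤ natThresh γ δ (l - 1) :=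
                mu_mono hγ1 hδ0 (by omega)
              have h2 : natThresh γ δ (l - 1) < natThresh γ δ l := by
                have h := mu_succ (δ := δ) hγ1 (show 1 ≤ l - 1 by omega)
                rw [show l - 1 + 1 = l by omega] at h
                linarith
              linarith
            · have hc' : l ≤ j := by omega
              have h1 : natThresh γ δ l ≤ natThresh γ δ j := mu_mono hγ1 hδ0 hc'
              linarith [hcon, le_trans hx hxt, hu]
          have hyeq : y = natThresh γ δ l := le_antisymm (by rw [← hjl]; exact hy) hyl
          have hfix : γ * natThresh γ δ l + δ * ((l:ℝ) - 1) = natThresh γ δ l := by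
            rw [show ((l:ℝ) - 1) = ((l - 1 : ℕ) : ℝ) by rw [Nat.cast_sub (by omega)]; norm_num,
              lan_eq hγ1 (l - 1) (natThresh γ δ l), show l - 1 + 1 = l by omega]
            ring
          have hmul1 : natThresh γ δ l < natThresh γ δ (l + 1) := by
            have h := mu_succ (δ := δ) hγ1 (show 1 ≤ l by omega)
            linarith
          refine ⟨stayV β γ cplus cminus r δ F l (natThresh γ δ l) 0,
            Or.inr (Or.inl ⟨natThresh γ δ l, 0, le_of_eq hyeq,
              mu_mono hγ1 hδ0 hlL, le_refl 0, by linarith, fun _ => by linarith, rfl⟩), ?_⟩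
          rw [hveq]
          unfold stayV relV
          rw [hfix]
          have hdiag' : F l (natThresh γ δ l) ≤ F (l - 1) (natThresh γ δ (l - 1)) := by
            have h := hF.diag (l - 1) (by omega) (by omega)
            rwa [show l - 1 + 1 = l by omega] at h
          have hzx : γ * xt + δ * ((l:ℝ) - 2)
              = natThresh γ δ (l - 1) + γ * (xt - natThresh γ δ (l - 1)) := by
            rw [hcast, lan_eq hγ1 (l - 2) xt, show l - 2 + 1 = l - 1 by omega]
          have hxtl1 : natThresh γ δ (l - 1) ≤ xt := by
            rw [← hjl] at *
            exact le_trans (by rw [show j + 1 - 1 = j by omega]; exact hx) hxt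
          have hzxlow : natThresh γ δ (l - 1) ≤ γ * xt + δ * ((l:ℝ) - 2) := by
            rw [hzx]
            linarith [mul_nonneg hγ0 (sub_nonneg.2 hxtl1)]
          have hzxL : γ * xt + δ * ((l:ℝ) - 2) ≤ natThresh γ δ L := by
            rw [hcast]; exact lan_le_muL hγ0 hγ1 hδ0 (by omega) hxtL
          have hmono : F (l - 1) (natThresh γ δ (l - 1))
              ≤ F (l - 1) (γ * xt + δ * ((l:ℝ) - 2)) :=
            hF.mono (l - 1) (by omega) (by omega) _ _ (mu_nonneg hγ1 hδ0 _) hzxlow hzxL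
          have f2 := mul_le_mul_of_nonneg_left (hdiag'.trans hmono) hβ0
          have f3 := mul_le_mul_of_nonneg_left
            (show natThresh γ δ l - xt ≤ y - x by linarith [le_trans hx hxt, hyeq]) hc1.le
          linarith [f2, f3, mul_nonneg hcm.le hu, hR.le,
            mul_le_mul_of_nonneg_right (show (1 - β * γ) * cplus ≤ cplus by linarith [mul_nonneg H.t_pos.le hcp.le])
              (show (0:ℝ) ≤ y - x by linarith)]
  · -- staying
    rcases le_total y xt with hyx | hyx
    · exact ⟨v, Or.inr (Or.inl ⟨xt, u, hyx, hxtL, hu, hcon, hcon2, hveq⟩), by linarith⟩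
    · have hcast : ((l:ℝ) - 1) = ((l - 1 : ℕ) : ℝ) := by
        rw [Nat.cast_sub (by omega : 1 ≤ l)]; norm_num
      have hz0 : 0 ≤ γ * xt + δ * ((l:ℝ) - 1) := by
        rw [hcast]; exact lan_nonneg hγ0 hδ0 (le_trans hx0 hxt) _
      have hzL : γ * y + δ * ((l:ℝ) - 1) ≤ natThresh γ δ L := by
        rw [hcast]; exact lan_le_muL hγ0 hγ1 hδ0 (by omega) hymuL
      have hzxy : γ * xt + δ * ((l:ℝ) - 1) ≤ γ * y + δ * ((l:ℝ) - 1) := by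
        linarith [mul_le_mul_of_nonneg_left hyx hγ0]
      have hlip := hF.lip l hl1 hlL _ _ hz0 hzxy hzL
      have f1 := mul_le_mul_of_nonneg_left hlip hβ0
      rcases le_total (y - xt) u with hA | hA
      · refine ⟨stayV β γ cplus cminus r δ F l y (u - (y - xt)),
          Or.inr (Or.inl ⟨y, u - (y - xt), le_refl y, hymuL, by linarith, by linarith,
            fun hlt => by linarith [hcon2 hlt], rfl⟩), ?_⟩
        rw [hveq]
        unfold stayV
        linarith [f1, mul_nonneg hcm.le (show (0:ℝ) ≤ y - xt by linarith),
          mul_le_mul_of_nonneg_left (show y - xt ≤ y - x by linarith) hcp.le]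
      · rcases Nat.lt_or_ge l L with hlL2 | hlL2
        · rcases lt_or_ge y (natThresh γ δ (l + 1)) with hyl | hyl
          · refine ⟨stayV β γ cplus cminus r δ F l y 0,
              Or.inr (Or.inl ⟨y, 0, le_refl y, hymuL, le_refl 0, by linarith,
                fun _ => by linarith, rfl⟩), ?_⟩
            rw [hveq]
            unfold stayV
            linarith [f1, mul_nonneg hcm.le hu,
              mul_le_mul_of_nonneg_left (show y - xt ≤ y - x by linarith) hcp.le]
          · -- y = μ (l+1), j = l : switch to the promotion action (μ (l+1), 0)
            have hcon2' := hcon2 hlL2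
            have hjl : j = l := by
              by_contra hne
              rcases Nat.lt_or_ge j l with hc | hc
              · have h1 : natThresh γ δ (j + 1) ≤ natThresh γ δ l := mu_mono hγ1 hδ0 (by omega)
                have h2 : natThresh γ δ l < natThresh γ δ (l + 1) := by
                  have h := mu_succ (δ := δ) hγ1 (show 1 ≤ l by omega)
                  linarith
                linarith
              · have h1 : natThresh γ δ (l + 1) ≤ natThresh γ δ j := mu_mono hγ1 hδ0 (by omega)
                linarith [le_trans hx hxt, hu, hcon2']
            have hyeq : y = natThresh γ δ (l + 1) := by
              refine le_antisymm ?_ hyl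
              rw [← hjl]
              exact hy
            have hfix : γ * natThresh γ δ (l + 1) + δ * (l:ℝ) = natThresh γ δ (l + 1) := by
              rw [lan_eq hγ1 l (natThresh γ δ (l + 1))]; ring
            refine ⟨proV β γ cplus cminus r δ F l (natThresh γ δ (l + 1)) 0,
              Or.inr (Or.inr ⟨natThresh γ δ (l + 1), 0, le_of_eq hyeq,
                mu_mono hγ1 hδ0 (by omega), le_refl 0, hlL2, by linarith, rfl⟩), ?_⟩
            rw [hveq]
            unfold proV stayV
            rw [hfix]
            have hdiag : F (l + 1) (natThresh γ δ (l + 1)) ≤ F l (natThresh γ δ l) :=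
              hF.diag l hl1 hlL2
            have hzx : γ * xt + δ * ((l:ℝ) - 1)
                = natThresh γ δ l + γ * (xt - natThresh γ δ l) := by
              rw [hcast, lan_eq hγ1 (l - 1) xt, show l - 1 + 1 = l by omega]
            have hxtl : natThresh γ δ l ≤ xt := by rw [← hjl]; exact le_trans hx hxt
            have hzxlow : natThresh γ δ l ≤ γ * xt + δ * ((l:ℝ) - 1) := by
              rw [hzx]
              linarith [mul_nonneg hγ0 (sub_nonneg.2 hxtl)]
            have hzxL : γ * xt + δ * ((l:ℝ) - 1) ≤ natThresh γ δ L := by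
              rw [hcast]; exact lan_le_muL hγ0 hγ1 hδ0 (by omega) hxtL
            have hmono : F l (natThresh γ δ l) ≤ F l (γ * xt + δ * ((l:ℝ) - 1)) :=
              hF.mono l hl1 hlL _ _ (mu_nonneg hγ1 hδ0 _) hzxlow hzxL
            have f2 := mul_le_mul_of_nonneg_left (hdiag.trans hmono) hβ0
            have f3 := mul_le_mul_of_nonneg_left
              (show natThresh γ δ (l + 1) - xt ≤ y - x by linarith [le_trans hx hxt, hyeq])
              hc1.le
            linarith [f2, f3, mul_nonneg hcm.le hu, hR.le,
              mul_le_mul_of_nonneg_right (show (1 - β * γ) * cplus ≤ cplus by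
                linarith [mul_nonneg H.t_pos.le hcp.le]) (show (0:ℝ) ≤ y - x by linarith)]
        · -- l = L : no upper constraint on staying
          refine ⟨stayV β γ cplus cminus r δ F l y 0,
            Or.inr (Or.inl ⟨y, 0, le_refl y, hymuL, le_refl 0, by linarith,
              fun hlt => absurd hlt (by omega), rfl⟩), ?_⟩
          rw [hveq]
          unfold stayV
          linarith [f1, mul_nonneg hcm.le hu,
            mul_le_mul_of_nonneg_left (show y - xt ≤ y - x by linarith) hcp.le]
  · -- promotion
    rcases le_total y xt with hyx | hyx
    · exact ⟨v, Or.inr (Or.inr ⟨xt, u, hyx, hxtL, hu, hlL', hcon, hveq⟩), by linarith⟩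
    · have hz0 : 0 ≤ γ * xt + δ * (l:ℝ) := lan_nonneg hγ0 hδ0 (le_trans hx0 hxt) _
      have hzL : γ * y + δ * (l:ℝ) ≤ natThresh γ δ L :=
        lan_le_muL hγ0 hγ1 hδ0 (by omega) hymuL
      have hzxy : γ * xt + δ * (l:ℝ) ≤ γ * y + δ * (l:ℝ) := by
        linarith [mul_le_mul_of_nonneg_left hyx hγ0]
      have hlip := hF.lip (l + 1) (by omega) (by omega) _ _ hz0 hzxy hzL
      have f1 := mul_le_mul_of_nonneg_left hlip hβ0
      rcases le_total (y - xt) u with hA | hA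
      · refine ⟨proV β γ cplus cminus r δ F l y (u - (y - xt)),
          Or.inr (Or.inr ⟨y, u - (y - xt), le_refl y, hymuL, by linarith, hlL',
            by linarith, rfl⟩), ?_⟩
        rw [hveq]
        unfold proV
        linarith [f1, mul_nonneg hcm.le (show (0:ℝ) ≤ y - xt by linarith),
          mul_le_mul_of_nonneg_left (show y - xt ≤ y - x by linarith) hcp.le]
      · refine ⟨proV β γ cplus cminus r δ F l y 0,
          Or.inr (Or.inr ⟨y, 0, le_refl y, hymuL, le_refl 0, hlL', by linarith, rfl⟩), ?_⟩
        rw [hveq]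
        unfold proV
        linarith [f1, mul_nonneg hcm.le hu,
          mul_le_mul_of_nonneg_left (show y - xt ≤ y - x by linarith) hcp.le]

/-- Global Lipschitz estimate for `T F` on `[0, μ L]`. -/
lemma Tt_lip (H : Hyp β γ cplus cminus r δ L) {F : ℕ → ℝ → ℝ}
    (hF : Good β γ cplus cminus r δ L F) {l : ℕ} (hl1 : 1 ≤ l) (hlL : l ≤ L) :
    ∀ x y, 0 ≤ x → x ≤ y → y ≤ natThresh γ δ L →
      Tt β γ cplus cminus r δ L F l y - Tt β γ cplus cminus r δ L F l x
        ≤ cplus * (y - x) :=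
  lip_chain H H.cp_pos.le
    (fun j hj1 hjL x y hjx hxy hyj => Tt_lip_loc H hF hl1 hlL hj1 hjL hjx hxy hyj)

lemma C0_eq (H : Hyp β γ cplus cminus r δ L) :
    C0 β γ cplus cminus r δ L * (1 - β)
      = (r + β * cplus * δ) * ((L : ℝ) - 1)
        + ((1 - β * γ) * cplus + cminus) * natThresh γ δ L := by
  unfold C0
  rw [div_mul_cancel₀ _ (show (1:ℝ) - β ≠ 0 by linarith [H.hβ1])]

set_option maxHeartbeats 1000000 in
lemma Tt_bdd (H : Hyp β γ cplus cminus r δ L) {F : ℕ → ℝ → ℝ}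
    (hF : Good β γ cplus cminus r δ L F) {l : ℕ} {x : ℝ} (hl1 : 1 ≤ l) (hlL : l ≤ L)
    (hx0 : 0 ≤ x) (hxL : x ≤ natThresh γ δ L) :
    |Tt β γ cplus cminus r δ L F l x| ≤ C0 β γ cplus cminus r δ L := by
  have hγ1 := H.hγ1
  have hδ0 := H.hδ.le
  have hγ0 := H.hγ0.le
  have hβ0 := H.hβ0.le
  have hcp := H.cp_pos
  have hcm := H.hcm
  have hc1 := H.c1_pos
  have hR := H.R_pos
  have hμL0 : 0 ≤ natThresh γ δ L := mu_nonneg hγ1 hδ0 L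
  have hL1R : (0:ℝ) ≤ (L:ℝ) - 1 := by
    have : (2:ℝ) ≤ (L:ℝ) := by exact_mod_cast H.hL
    linarith
  have hC0e := C0_eq H
  have hC0n := C0_nonneg H
  have hsum : 0 ≤ ((1 - β * γ) * cplus + cminus) * natThresh γ δ L :=
    mul_nonneg (by linarith) hμL0
  have hRL : 0 ≤ (r + β * cplus * δ) * ((L:ℝ) - 1) := mul_nonneg hR.le hL1R
  rw [abs_le]
  constructor
  · -- lower bound
    have hlow := lb_le_sInf (BSet_nonempty H F hl1 hlL hxL)
      (BSet_lower H hF.lb hl1 hlL hx0)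
    have : -((r + β * cplus * δ) * ((L : ℝ) - 1) + β * C0 β γ cplus cminus r δ L)
        ≤ Tt β γ cplus cminus r δ L F l x := hlow
    linarith [this, hC0e, hsum]
  · -- upper bound
    rcases Nat.lt_or_ge l L with hlt | hge
    · set u0 := max (natThresh γ δ (l + 1) - x) 0 with hu0
      have hmem : proV β γ cplus cminus r δ F l x u0
          ∈ BSet β γ cplus cminus r δ L (natThresh γ δ) F l x := by
        refine Or.inr (Or.inr ⟨x, u0, le_refl x, hxL, le_max_right _ _, hlt, ?_, rfl⟩)
        rcases max_cases (natThresh γ δ (l + 1) - x) 0 with ⟨hmx, _⟩ | ⟨hmx, _⟩ <;>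
          rw [hu0, hmx] <;> linarith
      have hTle : Tt β γ cplus cminus r δ L F l x ≤ proV β γ cplus cminus r δ F l x u0 :=
        sInf_le_of_mem (BSet_bddBelow H hF.lb hl1 hlL hx0) hmem
      have hu0le : u0 ≤ natThresh γ δ L := by
        refine max_le ?_ hμL0
        have := mu_mono (δ := δ) hγ1 hδ0 (show l + 1 ≤ L by omega)
        linarith
      have hzdom1 : 0 ≤ γ * x + δ * (l:ℝ) := lan_nonneg hγ0 hδ0 hx0 _
      have hzdom2 : γ * x + δ * (l:ℝ) ≤ natThresh γ δ L :=
        lan_le_muL hγ0 hγ1 hδ0 (by omega) hxL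
      have hFub := (abs_le.1 (hF.bdd (l + 1) (by omega) (by omega) _ hzdom1 hzdom2)).2
      have hlR : (0:ℝ) ≤ (l:ℝ) := by positivity
      unfold proV at hTle
      linarith [hTle, mul_le_mul_of_nonneg_left hxL hc1.le,
        mul_le_mul_of_nonneg_left hu0le hcm.le,
        mul_le_mul_of_nonneg_left hFub hβ0, mul_nonneg hR.le hlR, hC0e, hRL]
    · have hleq : l = L := by omega
      have hcast : ((l:ℝ) - 1) = ((l - 1 : ℕ) : ℝ) := by
        rw [Nat.cast_sub (by omega : 1 ≤ l)]; norm_num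
      have hfix : γ * natThresh γ δ l + δ * ((l:ℝ) - 1) = natThresh γ δ l := by
        rw [hcast, lan_eq hγ1 (l - 1) (natThresh γ δ l), show l - 1 + 1 = l by omega]
        ring
      have hmulL : natThresh γ δ l = natThresh γ δ L := by rw [hleq]
      have hmem : stayV β γ cplus cminus r δ F l (natThresh γ δ l) 0
          ∈ BSet β γ cplus cminus r δ L (natThresh γ δ) F l x := by
        exact Or.inr (Or.inl ⟨natThresh γ δ l, 0, by linarith, le_of_eq hmulL, le_refl 0,
          by linarith, fun hc => absurd hc (by omega), rfl⟩)
      have hTle : Tt β γ cplus cminus r δ L F l x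
          ≤ stayV β γ cplus cminus r δ F l (natThresh γ δ l) 0 :=
        sInf_le_of_mem (BSet_bddBelow H hF.lb hl1 hlL hx0) hmem
      have hFub := (abs_le.1 (hF.bdd l hl1 hlL (natThresh γ δ l)
        (by rw [hmulL]; exact hμL0) (le_of_eq hmulL))).2
      unfold stayV at hTle
      rw [hfix] at hTle
      have hlcast : ((l:ℝ) - 1) = (L:ℝ) - 1 := by rw [hleq]
      have hl1R : 0 ≤ (l:ℝ) - 1 := by rw [hlcast]; exact hL1R
      have hReq : (r + β * cplus * δ) * ((l:ℝ) - 1) = (r + β * cplus * δ) * ((L:ℝ) - 1) := by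
        rw [hlcast]
      linarith [hTle, mul_le_mul_of_nonneg_left hFub hβ0, hRL, hC0e,
        mul_nonneg hcm.le hμL0, hReq,
        mul_le_mul_of_nonneg_left (le_of_eq hmulL) hc1.le]

/-- `T` preserves the invariant class. -/
lemma Good_TT (H : Hyp β γ cplus cminus r δ L) {F : ℕ → ℝ → ℝ}
    (hF : Good β γ cplus cminus r δ L F) :
    Good β γ cplus cminus r δ L (Tt β γ cplus cminus r δ L F) := by
  have hγ1 := H.hγ1
  have hδ0 := H.hδ.le
  refine ⟨?_, ?_, ?_, ?_, ?_, ?_⟩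
  · exact fun l hl1 hlL x y hx0 hxy hyL => Tt_mono H hF.lb hl1 hlL hx0 hxy hyL
  · intro l hl1 hlL x y hx0 hxy hyL
    exact Tt_lip H hF hl1 hlL x y hx0 hxy hyL
  · intro l k hlL hkl x y hx hxy hy
    rcases Nat.eq_zero_or_pos k with hk0 | hk1
    · subst hk0
      simp only [Nat.sub_zero] at hx hy
      have heq : Tt β γ cplus cminus r δ L F l x = Tt β γ cplus cminus r δ L F l y := by
        rcases Nat.lt_or_ge l L with hlt | hge
        · have h1 := Tt_eq_Vs H hF (by omega) hlt hx
            (le_trans (le_trans hxy hy) (mu_mono hγ1 hδ0 (by omega)))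
          have h2 := Tt_eq_Vs H hF (by omega) hlt (le_trans hx hxy)
            (le_trans hy (mu_mono hγ1 hδ0 (by omega)))
          rw [h1, h2]
        · have hleq : l = L := by omega
          subst hleq
          have h1 := Tt_eq_VsL H hF hx (le_trans hxy hy)
          have h2 := Tt_eq_VsL H hF (le_trans hx hxy) hy
          rw [h1, h2]
      rw [heq]
      simp
    · exact Tt_flip H hF hlL hk1 hkl hx hxy hy
  · intro l hl1 hlL x hx1 hx2
    have h1 := Tt_eq_Vs H hF hl1 hlL hx1 hx2
    have h2 := Tt_eq_Vs H hF hl1 hlL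
      (mu_mono (δ := δ) hγ1 hδ0 (show l - 1 ≤ l + 1 by omega)) (le_refl _)
    rw [h1, h2]
  · intro l hl1 hlL
    have h2 := Tt_eq_Vs H hF hl1 hlL
      (mu_mono (δ := δ) hγ1 hδ0 (show l - 1 ≤ l by omega))
      (mu_mono (δ := δ) hγ1 hδ0 (show l ≤ l + 1 by omega))
    rw [h2]
    rcases Nat.lt_or_ge (l + 1) L with hlt | hge
    · have h1 := Tt_eq_Vs H hF (by omega) hlt
        (mu_mono (δ := δ) hγ1 hδ0 (show l + 1 - 1 ≤ l + 1 by omega))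
        (mu_mono (δ := δ) hγ1 hδ0 (show l + 1 ≤ l + 1 + 1 by omega))
      rw [h1]
      unfold Vs
      have hdiag := hF.diag (l + 1) (by omega) hlt
      have hsucc := mu_succ (δ := δ) hγ1 (show 1 ≤ l + 1 by omega)
      have hRm := H.R_ge
      have f1 := mul_le_mul_of_nonneg_left hdiag H.hβ0.le
      have hc1 := H.c1_pos
      have e1 : (1 - β * γ) * cplus * natThresh γ δ (l + 1 + 1)
          = (1 - β * γ) * cplus * natThresh γ δ (l + 1)
            + (1 - β * γ) * cplus * (δ / (1 - γ)) := by rw [hsucc]; ring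
      push_cast
      linarith [f1, hRm, e1]
    · have hleq : l + 1 = L := by omega
      have h1 : Tt β γ cplus cminus r δ L F (l + 1) (natThresh γ δ (l + 1))
          = VsL β γ cplus cminus r δ L F := by
        rw [hleq]
        exact Tt_eq_VsL H hF (mu_mono hγ1 hδ0 (by omega)) (le_refl _)
      rw [h1]
      unfold Vs VsL
      rw [← hleq]
      push_cast
      ring_nf
      exact le_refl _
  · exact fun l hl1 hlL x hx0 hxL => Tt_bdd H hF hl1 hlL hx0 hxL

set_option maxHeartbeats 1000000 in
/-- One-sided contraction estimate. -/
lemma Tt_close (H : Hyp β γ cplus cminus r δ L) {F G : ℕ → ℝ → ℝ} {CG M : ℝ}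
    (hGb : ∀ a z, 1 ≤ a → a ≤ L → 0 ≤ z → z ≤ natThresh γ δ L → -CG ≤ G a z)
    (hFG : ∀ a z, 1 ≤ a → a ≤ L → 0 ≤ z → z ≤ natThresh γ δ L → G a z - F a z ≤ M)
    {l : ℕ} {x : ℝ} (hl1 : 1 ≤ l) (hlL : l ≤ L) (hx0 : 0 ≤ x)
    (hxL : x ≤ natThresh γ δ L) :
    Tt β γ cplus cminus r δ L G l x ≤ Tt β γ cplus cminus r δ L F l x + β * M := by
  have hγ1 := H.hγ1
  have hδ0 := H.hδ.le
  have hγ0 := H.hγ0.le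
  have hβ0 := H.hβ0.le
  unfold Tt
  refine sInf_le_sInf_add (BSet_nonempty H F hl1 hlL hxL)
    (BSet_bddBelow H hGb hl1 hlL hx0) ?_
  intro v hv
  obtain ⟨xt, u, hxt, hxtL, hu, hll, hcon, hveq⟩ | ⟨xt, u, hxt, hxtL, hu, hcon, hcon2, hveq⟩ |
    ⟨xt, u, hxt, hxtL, hu, hlL', hcon, hveq⟩ := hv
  · refine ⟨relV β γ cplus cminus r δ G l xt u,
      Or.inl ⟨xt, u, hxt, hxtL, hu, hll, hcon, rfl⟩, ?_⟩
    rw [hveq]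
    unfold relV
    have hcast : ((l:ℝ) - 2) = ((l - 2 : ℕ) : ℝ) := by rw [Nat.cast_sub hll]; norm_num
    have hz1 : 0 ≤ γ * xt + δ * ((l:ℝ) - 2) := by
      rw [hcast]; exact lan_nonneg hγ0 hδ0 (le_trans hx0 hxt) _
    have hz2 : γ * xt + δ * ((l:ℝ) - 2) ≤ natThresh γ δ L := by
      rw [hcast]; exact lan_le_muL hγ0 hγ1 hδ0 (by omega) hxtL
    have h := hFG (l - 1) _ (by omega) (by omega) hz1 hz2
    linarith [mul_le_mul_of_nonneg_left h hβ0]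
  · refine ⟨stayV β γ cplus cminus r δ G l xt u,
      Or.inr (Or.inl ⟨xt, u, hxt, hxtL, hu, hcon, hcon2, rfl⟩), ?_⟩
    rw [hveq]
    unfold stayV
    have hcast : ((l:ℝ) - 1) = ((l - 1 : ℕ) : ℝ) := by
      rw [Nat.cast_sub (by omega : 1 ≤ l)]; norm_num
    have hz1 : 0 ≤ γ * xt + δ * ((l:ℝ) - 1) := by
      rw [hcast]; exact lan_nonneg hγ0 hδ0 (le_trans hx0 hxt) _
    have hz2 : γ * xt + δ * ((l:ℝ) - 1) ≤ natThresh γ δ L := by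
      rw [hcast]; exact lan_le_muL hγ0 hγ1 hδ0 (by omega) hxtL
    have h := hFG l _ hl1 hlL hz1 hz2
    linarith [mul_le_mul_of_nonneg_left h hβ0]
  · refine ⟨proV β γ cplus cminus r δ G l xt u,
      Or.inr (Or.inr ⟨xt, u, hxt, hxtL, hu, hlL', hcon, rfl⟩), ?_⟩
    rw [hveq]
    unfold proV
    have hz1 : 0 ≤ γ * xt + δ * (l:ℝ) := lan_nonneg hγ0 hδ0 (le_trans hx0 hxt) _
    have hz2 : γ * xt + δ * (l:ℝ) ≤ natThresh γ δ L :=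
      lan_le_muL hγ0 hγ1 hδ0 (by omega) hxtL
    have h := hFG (l + 1) _ (by omega) (by omega) hz1 hz2
    linarith [mul_le_mul_of_nonneg_left h hβ0]

/-- Two-sided contraction estimate. -/
lemma Tt_contract (H : Hyp β γ cplus cminus r δ L) {F G : ℕ → ℝ → ℝ} {CF CG M : ℝ}
    (hFb : ∀ a z, 1 ≤ a → a ≤ L → 0 ≤ z → z ≤ natThresh γ δ L → -CF ≤ F a z)
    (hGb : ∀ a z, 1 ≤ a → a ≤ L → 0 ≤ z → z ≤ natThresh γ δ L → -CG ≤ G a z)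
    (hFG : ∀ a z, 1 ≤ a → a ≤ L → 0 ≤ z → z ≤ natThresh γ δ L → |F a z - G a z| ≤ M)
    {l : ℕ} {x : ℝ} (hl1 : 1 ≤ l) (hlL : l ≤ L) (hx0 : 0 ≤ x)
    (hxL : x ≤ natThresh γ δ L) :
    |Tt β γ cplus cminus r δ L F l x - Tt β γ cplus cminus r δ L G l x| ≤ β * M := by
  rw [abs_le]
  constructor
  · have h := Tt_close H (F := F) (G := G) (CG := CG) (M := M) hGb
      (fun a z h1 h2 h3 h4 => by linarith [(abs_le.1 (hFG a z h1 h2 h3 h4)).1])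
      hl1 hlL hx0 hxL
    linarith
  · have h := Tt_close H (F := G) (G := F) (CG := CF) (M := M) hFb
      (fun a z h1 h2 h3 h4 => by linarith [(abs_le.1 (hFG a z h1 h2 h3 h4)).2])
      hl1 hlL hx0 hxL
    linarith

/-- The iterates of `T` starting from `0`. -/
noncomputable def seqF (β γ cplus cminus r δ : ℝ) (L : ℕ) (n : ℕ) : ℕ → ℝ → ℝ :=
  (fun G => Tt β γ cplus cminus r δ L G)^[n] (fun _ _ => 0)

lemma seqF_succ (n : ℕ) :
    seqF β γ cplus cminus r δ L (n + 1) = Tt β γ cplus cminus r δ L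
      (seqF β γ cplus cminus r δ L n) :=
  Function.iterate_succ_apply' _ n _

lemma Good_zero (H : Hyp β γ cplus cminus r δ L) :
    Good β γ cplus cminus r δ L (fun _ _ => (0:ℝ)) := by
  have hcoef : ∀ k : ℕ, 0 ≤ (1 - (β * γ) ^ k) * cplus := fun k =>
    mul_nonneg (by linarith [pow_le_one₀ H.t_pos.le H.t_lt1.le (n := k)]) H.cp_pos.le
  refine ⟨fun _ _ _ _ _ _ _ _ => le_refl 0, ?_, ?_, fun _ _ _ _ _ _ => rfl,
    fun _ _ _ => le_refl 0, fun _ _ _ _ _ _ => by simpa using C0_nonneg H⟩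
  · intro l _ _ x y _ hxy _
    simpa using mul_nonneg H.cp_pos.le (by linarith : (0:ℝ) ≤ y - x)
  · intro l k _ _ x y _ hxy _
    simpa using mul_nonneg (hcoef k) (by linarith : (0:ℝ) ≤ y - x)

lemma Good_seq (H : Hyp β γ cplus cminus r δ L) (n : ℕ) :
    Good β γ cplus cminus r δ L (seqF β γ cplus cminus r δ L n) := by
  induction n with
  | zero => exact Good_zero H
  | succ n ih => rw [seqF_succ]; exact Good_TT H ih

lemma seq_step (H : Hyp β γ cplus cminus r δ L) (n : ℕ) {l : ℕ} {x : ℝ}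
    (hl1 : 1 ≤ l) (hlL : l ≤ L) (hx0 : 0 ≤ x) (hxL : x ≤ natThresh γ δ L) :
    dist (seqF β γ cplus cminus r δ L n l x) (seqF β γ cplus cminus r δ L (n + 1) l x)
      ≤ (2 * C0 β γ cplus cminus r δ L) * β ^ n := by
  induction n generalizing l x with
  | zero =>
    rw [Real.dist_eq]
    have h1 := (Good_seq H 1).bdd l hl1 hlL x hx0 hxL
    have h0 : seqF β γ cplus cminus r δ L 0 l x = 0 := rfl
    rw [h0, pow_zero]
    rw [abs_sub_comm]
    simp only [sub_zero]
    linarith [C0_nonneg H, h1]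
  | succ n ih =>
    have h := Tt_contract H (F := seqF β γ cplus cminus r δ L n)
      (G := seqF β γ cplus cminus r δ L (n + 1))
      (M := 2 * C0 β γ cplus cminus r δ L * β ^ n)
      (Good_seq H n).lb (Good_seq H (n + 1)).lb
      (fun a z h1 h2 h3 h4 => by
        have hh := ih (l := a) (x := z) h1 h2 h3 h4
        rwa [Real.dist_eq] at hh) hl1 hlL hx0 hxL
    rw [Real.dist_eq]
    rw [show seqF β γ cplus cminus r δ L (n + 1 + 1) = Tt β γ cplus cminus r δ L
      (seqF β γ cplus cminus r δ L (n + 1)) from seqF_succ (n + 1)]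
    nth_rewrite 1 [show seqF β γ cplus cminus r δ L (n + 1) = Tt β γ cplus cminus r δ L
      (seqF β γ cplus cminus r δ L n) from seqF_succ n]
    exact le_of_le_of_eq h (by ring)

end S13

open S13 Filter Topology in
/-- Theorem 4.2 part (2) (fixed-point structure for the natural thresholds): under the
stated cost and reward conditions, the multi-level Bellman operator with thresholds
`μ_l = δ(l-1)/(1-γ)` has a unique bounded fixed point `W`, which is continuous and
nondecreasing in `x`, constant on each promotion region `[μ_{max(l-1,1)}, μ_{l+1}]`,
`(1-β^kγ^k)c⁺`-Lipschitz on each `[μ_{l-k-1}, μ_{l-k}]`, and nonincreasing along the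
diagonal `l ↦ W(l, μ_l)`. -/
theorem stmt_13 (β γ cplus cminus r δ : ℝ) (L : ℕ)
    (hβ : β ∈ Set.Ioo (0:ℝ) 1) (hγ : γ ∈ Set.Ioo (0:ℝ) 1)
    (hδ : 0 < δ) (hcm : 0 < cminus) (hcmcp : cminus < cplus)
    (hr : (1 - β) * cplus * δ / (1 - γ) ≤ r)
    (hcm2 : max ((1 + β * γ / 2) * (1 - β * γ) * cplus)
        (β * γ * (1 - β ^ 2 * γ ^ 2) * cplus) ≤ cminus)
    (hL : 2 ≤ L) :
    ∃ W : ℕ → ℝ → ℝ,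
      (∃ C, ∀ l ∈ Finset.Icc 1 L, ∀ x ∈ Set.Icc (0:ℝ) (natThresh γ δ L), |W l x| ≤ C) ∧
      (∀ l ∈ Finset.Icc 1 L, ∀ x ∈ Set.Icc (0:ℝ) (natThresh γ δ L),
        mlBell β γ cplus cminus r δ L (natThresh γ δ) W l x = W l x) ∧
      (∀ W' : ℕ → ℝ → ℝ,
        (∃ C, ∀ l ∈ Finset.Icc 1 L, ∀ x ∈ Set.Icc (0:ℝ) (natThresh γ δ L), |W' l x| ≤ C) →
        (∀ l ∈ Finset.Icc 1 L, ∀ x ∈ Set.Icc (0:ℝ) (natThresh γ δ L),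
          mlBell β γ cplus cminus r δ L (natThresh γ δ) W' l x = W' l x) →
        ∀ l ∈ Finset.Icc 1 L, ∀ x ∈ Set.Icc (0:ℝ) (natThresh γ δ L), W' l x = W l x) ∧
      (∀ l ∈ Finset.Icc 1 L,
        ContinuousOn (W l) (Set.Icc 0 (natThresh γ δ L))
        ∧ MonotoneOn (W l) (Set.Icc 0 (natThresh γ δ L))) ∧
      (∀ l : ℕ, 1 ≤ l → l < L →
        ∀ x ∈ Set.Icc (natThresh γ δ (max (l - 1) 1)) (natThresh γ δ (l + 1)),
          W l x = W l (natThresh γ δ (l + 1))) ∧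
      (∀ l ∈ Finset.Icc 1 L, ∀ k : ℕ, k < l →
        ∀ x ∈ Set.Icc (natThresh γ δ (l - k - 1)) (natThresh γ δ (l - k)),
        ∀ y ∈ Set.Icc (natThresh γ δ (l - k - 1)) (natThresh γ δ (l - k)),
          |W l x - W l y| ≤ (1 - (β * γ) ^ k) * cplus * |x - y|) ∧
      (∀ l : ℕ, 1 ≤ l → l < L →
        W (l + 1) (natThresh γ δ (l + 1)) ≤ W l (natThresh γ δ l)) := by
  have H : Hyp β γ cplus cminus r δ L :=
    ⟨hβ.1, hβ.2, hγ.1, hγ.2, hδ, hcm, hcmcp, hr,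
      le_trans (le_max_left _ _) hcm2, le_trans (le_max_right _ _) hcm2, hL⟩
  have hγ1 := H.hγ1
  have hδ0 := H.hδ.le
  set C := C0 β γ cplus cminus r δ L with hC
  set W : ℕ → ℝ → ℝ :=
    fun l x => limUnder atTop (fun n => seqF β γ cplus cminus r δ L n l x) with hW
  have hμL0 : 0 ≤ natThresh γ δ L := mu_nonneg hγ1 hδ0 L
  have hgeo : ∀ l x, 1 ≤ l → l ≤ L → 0 ≤ x → x ≤ natThresh γ δ L → ∀ n,
      dist (seqF β γ cplus cminus r δ L n l x) (seqF β γ cplus cminus r δ L (n + 1) l x)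
        ≤ (2 * C) * β ^ n :=
    fun l x h1 h2 h3 h4 n => seq_step H n h1 h2 h3 h4
  have htd : ∀ l x, 1 ≤ l → l ≤ L → 0 ≤ x → x ≤ natThresh γ δ L →
      Tendsto (fun n => seqF β γ cplus cminus r δ L n l x) atTop (𝓝 (W l x)) :=
    fun l x h1 h2 h3 h4 =>
      (cauchySeq_of_le_geometric β (2 * C) H.hβ1 (hgeo l x h1 h2 h3 h4)).tendsto_limUnder
  have hdist : ∀ l x, 1 ≤ l → l ≤ L → 0 ≤ x → x ≤ natThresh γ δ L → ∀ n,
      |W l x - seqF β γ cplus cminus r δ L n l x| ≤ 2 * C * β ^ n / (1 - β) := by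
    intro l x h1 h2 h3 h4 n
    have h := dist_le_of_le_geometric_of_tendsto β (2 * C) H.hβ1 (hgeo l x h1 h2 h3 h4)
      (htd l x h1 h2 h3 h4) n
    rwa [Real.dist_eq, abs_sub_comm] at h
  have hGoodW : Good β γ cplus cminus r δ L W := by
    refine ⟨?_, ?_, ?_, ?_, ?_, ?_⟩
    · intro l hl1 hlL x y hx0 hxy hyL
      exact le_of_tendsto_of_tendsto' (htd l x hl1 hlL hx0 (le_trans hxy hyL))
        (htd l y hl1 hlL (le_trans hx0 hxy) hyL)
        (fun n => (Good_seq H n).mono l hl1 hlL x y hx0 hxy hyL)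
    · intro l hl1 hlL x y hx0 hxy hyL
      exact le_of_tendsto ((htd l y hl1 hlL (le_trans hx0 hxy) hyL).sub
        (htd l x hl1 hlL hx0 (le_trans hxy hyL)))
        (Eventually.of_forall fun n => (Good_seq H n).lip l hl1 hlL x y hx0 hxy hyL)
    · intro l k hlL hkl x y hx hxy hy
      have hx0 : 0 ≤ x := le_trans (mu_nonneg hγ1 hδ0 _) hx
      have hyL : y ≤ natThresh γ δ L := le_trans hy (mu_mono hγ1 hδ0 (by omega))
      exact le_of_tendsto ((htd l y (by omega) hlL (le_trans hx0 hxy) hyL).sub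
        (htd l x (by omega) hlL hx0 (le_trans hxy hyL)))
        (Eventually.of_forall fun n => (Good_seq H n).flip l k hlL hkl x y hx hxy hy)
    · intro l hl1 hlL x hx1 hx2
      have hx0 : 0 ≤ x := le_trans (mu_nonneg hγ1 hδ0 _) hx1
      have hxL : x ≤ natThresh γ δ L := le_trans hx2 (mu_mono hγ1 hδ0 (by omega))
      have hm1 : 0 ≤ natThresh γ δ (l + 1) := mu_nonneg hγ1 hδ0 _
      have hm2 : natThresh γ δ (l + 1) ≤ natThresh γ δ L := mu_mono hγ1 hδ0 (by omega)
      refine tendsto_nhds_unique (htd l x hl1 (by omega) hx0 hxL) ?_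
      refine (htd l (natThresh γ δ (l + 1)) hl1 (by omega) hm1 hm2).congr ?_
      intro n
      exact ((Good_seq H n).const l hl1 hlL x hx1 hx2).symm
    · intro l hl1 hlL
      have hm1 : 0 ≤ natThresh γ δ (l + 1) := mu_nonneg hγ1 hδ0 _
      have hm2 : natThresh γ δ (l + 1) ≤ natThresh γ δ L := mu_mono hγ1 hδ0 (by omega)
      have hm3 : 0 ≤ natThresh γ δ l := mu_nonneg hγ1 hδ0 _
      have hm4 : natThresh γ δ l ≤ natThresh γ δ L := mu_mono hγ1 hδ0 (by omega)
      exact le_of_tendsto_of_tendsto' (htd (l + 1) _ (by omega) (by omega) hm1 hm2)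
        (htd l _ hl1 (by omega) hm3 hm4)
        (fun n => (Good_seq H n).diag l hl1 hlL)
    · intro l hl1 hlL x hx0 hxL
      exact le_of_tendsto (htd l x hl1 hlL hx0 hxL).abs
        (Eventually.of_forall fun n => (Good_seq H n).bdd l hl1 hlL x hx0 hxL)
  have habs0 : ∀ c : ℝ, (∀ n : ℕ, ∃ K : ℝ, 0 ≤ K ∧ |c| ≤ K * β ^ n ∧
      ∀ m : ℕ, |c| ≤ K * β ^ m) → c = 0 := by
    intro c hc
    obtain ⟨K, hK0, _, hKall⟩ := hc 0
    have ht0 : Tendsto (fun n : ℕ => K * β ^ n) atTop (𝓝 0) := by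
      have := (tendsto_pow_atTop_nhds_zero_of_lt_one hβ.1.le hβ.2).const_mul K
      simpa using this
    have h0 : |c| ≤ 0 := ge_of_tendsto ht0 (Eventually.of_forall hKall)
    exact abs_eq_zero.1 (le_antisymm h0 (abs_nonneg c))
  have hfixW : ∀ l x, 1 ≤ l → l ≤ L → 0 ≤ x → x ≤ natThresh γ δ L →
      Tt β γ cplus cminus r δ L W l x = W l x := by
    intro l x h1 h2 h3 h4
    have hb : ∀ n : ℕ, |Tt β γ cplus cminus r δ L W l x - W l x|
        ≤ (4 * C * β / (1 - β)) * β ^ n := by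
      intro n
      have e1 : Tt β γ cplus cminus r δ L (seqF β γ cplus cminus r δ L n) l x
          = seqF β γ cplus cminus r δ L (n + 1) l x := by rw [seqF_succ]
      have h5 := Tt_contract H (F := W) (G := seqF β γ cplus cminus r δ L n)
        (M := 2 * C * β ^ n / (1 - β)) hGoodW.lb (Good_seq H n).lb
        (fun a z ha1 ha2 ha3 ha4 => hdist a z ha1 ha2 ha3 ha4 n) h1 h2 h3 h4
      have h6 := hdist l x h1 h2 h3 h4 (n + 1)
      have h7 := abs_sub (Tt β γ cplus cminus r δ L W l x
        - seqF β γ cplus cminus r δ L (n + 1) l x) (W l x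
        - seqF β γ cplus cminus r δ L (n + 1) l x)
      rw [e1] at h5
      have h8 : |Tt β γ cplus cminus r δ L W l x - W l x|
          ≤ |Tt β γ cplus cminus r δ L W l x - seqF β γ cplus cminus r δ L (n + 1) l x|
            + |W l x - seqF β γ cplus cminus r δ L (n + 1) l x| := by
        have := abs_sub_le (Tt β γ cplus cminus r δ L W l x)
          (seqF β γ cplus cminus r δ L (n + 1) l x) (W l x)
        rw [abs_sub_comm (seqF β γ cplus cminus r δ L (n + 1) l x) (W l x)] at this
        exact this
      have hβ0' := hβ.1.le
      have h1β : (0:ℝ) < 1 - β := by linarith [hβ.2]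
      calc |Tt β γ cplus cminus r δ L W l x - W l x|
          ≤ β * (2 * C * β ^ n / (1 - β)) + 2 * C * β ^ (n + 1) / (1 - β) := by
            linarith [h5, h6, h8]
        _ = (4 * C * β / (1 - β)) * β ^ n := by
            field_simp
            ring
    have hc := habs0 (Tt β γ cplus cminus r δ L W l x - W l x) ?_
    · linarith [sub_eq_zero.1 hc]
    · intro n
      refine ⟨4 * C * β / (1 - β), ?_, hb n, hb⟩
      have h1β : (0:ℝ) < 1 - β := by linarith [hβ.2]
      have hCge : (0:ℝ) ≤ C := C0_nonneg H
      have hβ0' : (0:ℝ) ≤ β := hβ.1.le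
      positivity
  refine ⟨W, ⟨C, fun l hl x hx => hGoodW.bdd l (Finset.mem_Icc.1 hl).1
    (Finset.mem_Icc.1 hl).2 x hx.1 hx.2⟩, ?_, ?_, ?_, ?_, ?_, ?_⟩
  · -- fixed point
    intro l hl x hx
    exact hfixW l x (Finset.mem_Icc.1 hl).1 (Finset.mem_Icc.1 hl).2 hx.1 hx.2
  · -- uniqueness
    intro W' hW'b hW'fix l hl x hx
    obtain ⟨C', hC'⟩ := hW'b
    have hW'lb : ∀ a z, 1 ≤ a → a ≤ L → 0 ≤ z → z ≤ natThresh γ δ L → -C' ≤ W' a z :=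
      fun a z h1 h2 h3 h4 =>
        (abs_le.1 (hC' a (Finset.mem_Icc.2 ⟨h1, h2⟩) z ⟨h3, h4⟩)).1
    have hC'0 : 0 ≤ C' := le_trans (abs_nonneg _)
      (hC' 1 (Finset.mem_Icc.2 ⟨le_refl 1, by omega⟩) 0 ⟨le_refl 0, hμL0⟩)
    have hiter : ∀ n : ℕ, ∀ a z, 1 ≤ a → a ≤ L → 0 ≤ z → z ≤ natThresh γ δ L →
        |W' a z - W a z| ≤ (C' + C) * β ^ n := by
      intro n
      induction n with
      | zero =>
        intro a z h1 h2 h3 h4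
        rw [pow_zero, mul_one, sub_eq_add_neg]
        refine le_trans (abs_add_le _ _) ?_
        rw [abs_neg]
        exact add_le_add (hC' a (Finset.mem_Icc.2 ⟨h1, h2⟩) z ⟨h3, h4⟩)
          (hGoodW.bdd a h1 h2 z h3 h4)
      | succ n ih =>
        intro a z h1 h2 h3 h4
        have e1 : W' a z = Tt β γ cplus cminus r δ L W' a z :=
          (hW'fix a (Finset.mem_Icc.2 ⟨h1, h2⟩) z ⟨h3, h4⟩).symm
        have e2 : W a z = Tt β γ cplus cminus r δ L W a z := (hfixW a z h1 h2 h3 h4).symm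
        rw [e1, e2]
        have h5 := Tt_contract H (F := W') (G := W) (M := (C' + C) * β ^ n)
          hW'lb hGoodW.lb ih h1 h2 h3 h4
        calc |Tt β γ cplus cminus r δ L W' a z - Tt β γ cplus cminus r δ L W a z|
            ≤ β * ((C' + C) * β ^ n) := h5
          _ = (C' + C) * β ^ (n + 1) := by ring
    have hc := habs0 (W' l x - W l x) ?_
    · exact sub_eq_zero.1 hc
    · intro n
      have hCC : 0 ≤ C' + C := by linarith [C0_nonneg H]
      exact ⟨C' + C, hCC,
        hiter n l x (Finset.mem_Icc.1 hl).1 (Finset.mem_Icc.1 hl).2 hx.1 hx.2,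
        fun m => hiter m l x (Finset.mem_Icc.1 hl).1 (Finset.mem_Icc.1 hl).2 hx.1 hx.2⟩
  · -- continuity and monotonicity
    intro l hl
    obtain ⟨hl1, hlL⟩ := Finset.mem_Icc.1 hl
    constructor
    · have hlip : LipschitzOnWith (Real.toNNReal cplus) (W l)
          (Set.Icc 0 (natThresh γ δ L)) := by
        rw [lipschitzOnWith_iff_dist_le_mul]
        intro x hx y hy
        rw [Real.dist_eq, Real.dist_eq, Real.coe_toNNReal cplus H.cp_pos.le]
        rcases le_total x y with hxy | hxy
        · have h1 := hGoodW.lip l hl1 hlL x y hx.1 hxy hy.2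
          have h2 := hGoodW.mono l hl1 hlL x y hx.1 hxy hy.2
          rw [abs_sub_comm, abs_of_nonneg (by linarith), abs_sub_comm,
            abs_of_nonneg (by linarith)]
          linarith
        · have h1 := hGoodW.lip l hl1 hlL y x hy.1 hxy hx.2
          have h2 := hGoodW.mono l hl1 hlL y x hy.1 hxy hx.2
          rw [abs_of_nonneg (by linarith), abs_of_nonneg (by linarith)]
          linarith
      exact hlip.continuousOn
    · exact fun x hx y hy hxy => hGoodW.mono l hl1 hlL x y hx.1 hxy hy.2
  · -- constancy on the promotion region
    intro l hl1 hlL x hx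
    have hmax : natThresh γ δ (max (l - 1) 1) = natThresh γ δ (l - 1) := by
      rcases Nat.lt_or_ge l 2 with h | h
      · have hl1' : l = 1 := by omega
        subst hl1'
        norm_num [mu_one, mu_zero]
      · rw [max_eq_left (by omega : 1 ≤ l - 1)]
    rw [hmax] at hx
    exact hGoodW.const l hl1 hlL x hx.1 hx.2
  · -- fine Lipschitz estimates
    intro l hl k hk x hx y hy
    obtain ⟨hl1, hlL⟩ := Finset.mem_Icc.1 hl
    have hdom : ∀ z : ℝ, z ∈ Set.Icc (natThresh γ δ (l - k - 1)) (natThresh γ δ (l - k)) →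
        0 ≤ z ∧ z ≤ natThresh γ δ L := fun z hz =>
      ⟨le_trans (mu_nonneg hγ1 hδ0 _) hz.1,
        le_trans hz.2 (mu_mono hγ1 hδ0 (by omega))⟩
    rcases le_total x y with hxy | hxy
    · have h1 := hGoodW.flip l k hlL hk x y hx.1 hxy hy.2
      have h2 := hGoodW.mono l hl1 hlL x y (hdom x hx).1 hxy (hdom y hy).2
      rw [abs_sub_comm, abs_of_nonneg (by linarith), abs_sub_comm, abs_of_nonneg (by linarith)]
      linarith
    · have h1 := hGoodW.flip l k hlL hk y x hy.1 hxy hx.2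
      have h2 := hGoodW.mono l hl1 hlL y x (hdom y hy).1 hxy (hdom x hx).2
      rw [abs_of_nonneg (by linarith), abs_of_nonneg (by linarith)]
      linarith
  · -- diagonal monotonicity
    exact fun l hl1 hlL => hGoodW.diag l hl1 hlL
end

section
/- Let f : [a, b] → ℝ be L-Lipschitz, let Δ > 0, and let G = { a + kΔ : k = 0, 1, …, N } with a + NΔ = b be a uniform grid. Let i ∈ G and j = i + Δ ∈ G be adjacent grid points, let p ∈ [0,1], and set x_p = p·i + (1−p)·j. Then | inf_{y ∈ [x_p, b]} f(y) − ( p · min_{g ∈ G, g ≥ i} f(g) + (1−p) · min_{g ∈ G, g ≥ j} f(g) ) | ≤ L·Δ/2. -/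
/-!
Write `i = a + k₀Δ`, `j = i + Δ`, `x_p = i + (1 - p)Δ`, `m` for the infimum of `f` on `[x_p, b]`
and `m₂` for the grid minimum over `k ≥ k₀ + 1`, so that the grid minimum over `k ≥ k₀` is
`f i ⊓ m₂`. The grid points `≥ j` lie in `[x_p, b]`, and `x_p` is within `(1 - p)Δ` of `i`, so
`m ≤ m₂` and `m ≤ f i + L(1 - p)Δ`: `m` exceeds the interpolation by at most `L p (1 - p) Δ`.
Conversely, a point `y ∈ [x_p, b]` past the midpoint `i + Δ/2` is within `Δ/2` of a grid point
`≥ j`, so `m₂ ≤ f y + LΔ/2`; a point `y ∈ [x_p, i + Δ/2]` exists only if `p ≥ 1/2`, and then the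
Lipschitz bounds from `i` and from `j`, weighted by `p` and `1 - p`, add up to at most `LΔ/2`.
-/

open scoped NNReal

theorem exists_nat_mem_Icc_abs_sub_le_half {r : ℝ} {m n : ℕ} (hm : (m : ℝ) ≤ r + 1 / 2)
    (hn : r ≤ n) : ∃ k ∈ Finset.Icc m n, |(k : ℝ) - r| ≤ 1 / 2 := by
  have h0 : 0 ≤ r + 1 / 2 := (Nat.cast_nonneg m).trans hm
  refine ⟨⌊r + 1 / 2⌋₊, Finset.mem_Icc.2 ⟨Nat.le_floor hm, ?_⟩, abs_le.2 ⟨?_, ?_⟩⟩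
  · exact Nat.lt_succ_iff.1 ((Nat.floor_lt h0).2 (by push_cast; linarith))
  · linarith [Nat.lt_floor_add_one (r + 1 / 2)]
  · linarith [Nat.floor_le h0]

theorem Finset.inf'_Icc_eq_inf_inf'_Icc_succ {α : Type*} [SemilatticeInf α] {k₀ N : ℕ}
    (hk₀ : k₀ < N) (h : (Finset.Icc k₀ N).Nonempty) (g : ℕ → α) :
    (Finset.Icc k₀ N).inf' h g = g k₀ ⊓ (Finset.Icc (k₀ + 1) N).inf' (nonempty_Icc.2 hk₀) g := by
  rw [← Finset.inf'_insert (nonempty_Icc.2 hk₀) g]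
  exact Finset.inf'_congr _ (insert_Icc_add_one_left_eq_Icc hk₀.le).symm fun _ _ => rfl

theorem csInf_image_le_inf' {α β ι : Type*} [ConditionallyCompleteLattice β] {f : α → β}
    {s : Set α} (hs : BddBelow (f '' s)) {t : Finset ι} (ht : t.Nonempty) {g : ι → α}
    (hg : ∀ i ∈ t, g i ∈ s) : sInf (f '' s) ≤ t.inf' ht fun i => f (g i) :=
  Finset.le_inf' _ _ fun i hi => csInf_le hs (Set.mem_image_of_mem f (hg i hi))

namespace LipschitzOnWith

variable {f : ℝ → ℝ} {K : ℝ≥0}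

theorem sInf_image_Icc_le_add_mul {a b u x : ℝ} (hf : LipschitzOnWith K f (Set.Icc a b))
    (hau : a ≤ u) (hux : u ≤ x) (hxb : x ≤ b) :
    sInf (f '' Set.Icc x b) ≤ f u + K * (x - u) := by
  have hbdd : BddBelow (f '' Set.Icc x b) :=
    isCompact_Icc.bddBelow_image (hf.continuousOn.mono (Set.Icc_subset_Icc_left (hau.trans hux)))
  have hx := hf.le_add_mul ⟨hau.trans hux, hxb⟩ ⟨hau, hux.trans hxb⟩
  rw [Real.dist_eq, abs_of_nonneg (sub_nonneg.2 hux)] at hx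
  exact (csInf_le hbdd (Set.mem_image_of_mem f ⟨le_rfl, hxb⟩)).trans hx

theorem interp_le_add_mul_half {s : Set ℝ} (hf : LipschitzOnWith K f s) {u Δ p y : ℝ}
    (hΔ : 0 ≤ Δ) (hu : u ∈ s) (hv : u + Δ ∈ s) (hy : y ∈ s) (hp : p ∈ Set.Icc (0 : ℝ) 1)
    (hy₁ : u + (1 - p) * Δ ≤ y) (hy₂ : y ≤ u + Δ / 2) :
    p * f u + (1 - p) * f (u + Δ) ≤ f y + K * (Δ / 2) := by
  obtain ⟨hp₀, hp₁⟩ := hp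
  have hu' := hf.le_add_mul hu hy
  have hv' := hf.le_add_mul hv hy
  rw [Real.dist_eq, abs_sub_comm, abs_of_nonneg (by nlinarith)] at hu'
  rw [Real.dist_eq, abs_of_nonneg (by linarith)] at hv'
  have hw : p * (y - u) + (1 - p) * (u + Δ - y) ≤ Δ / 2 := by
    rcases le_total p (1 / 2) with h | h <;> nlinarith
  calc p * f u + (1 - p) * f (u + Δ)
      ≤ p * (f y + K * (y - u)) + (1 - p) * (f y + K * (u + Δ - y)) := by gcongr
    _ = f y + K * (p * (y - u) + (1 - p) * (u + Δ - y)) := by ring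
    _ ≤ f y + K * (Δ / 2) := by gcongr

end LipschitzOnWith

section Grid

variable {f : ℝ → ℝ} {K : ℝ≥0} {a Δ : ℝ} {N k₀ : ℕ}

theorem add_nat_mul_mem_Icc (hΔ : 0 ≤ Δ) {k : ℕ} (hk : k ≤ N) :
    a + k * Δ ∈ Set.Icc a (a + N * Δ) :=
  ⟨le_add_of_nonneg_right (by positivity), by gcongr⟩

theorem exists_grid_abs_sub_le_half (hΔ : 0 < Δ) {y : ℝ} (hy₁ : a + k₀ * Δ + Δ / 2 ≤ y)
    (hy₂ : y ≤ a + N * Δ) : ∃ k ∈ Finset.Icc (k₀ + 1) N, |a + k * Δ - y| ≤ Δ / 2 := by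
  obtain ⟨k, hk, hkr⟩ := exists_nat_mem_Icc_abs_sub_le_half (r := (y - a) / Δ) (m := k₀ + 1)
    (n := N) (by rw [Nat.cast_succ, ← sub_le_iff_le_add, le_div_iff₀ hΔ]; linarith)
    (by rw [div_le_iff₀ hΔ]; linarith)
  refine ⟨k, hk, ?_⟩
  have : a + k * Δ - y = (k - (y - a) / Δ) * Δ := by field_simp; ring
  rw [this, abs_mul, abs_of_pos hΔ]
  nlinarith

theorem sInf_image_Icc_le_inf'_Icc_succ (hf : ContinuousOn f (Set.Icc a (a + N * Δ)))
    (hΔ : 0 ≤ Δ) {x : ℝ} (hax : a ≤ x) (hx : x ≤ a + (k₀ + 1 : ℕ) * Δ)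
    (h : (Finset.Icc (k₀ + 1) N).Nonempty) :
    sInf (f '' Set.Icc x (a + N * Δ)) ≤ (Finset.Icc (k₀ + 1) N).inf' h fun k => f (a + k * Δ) :=
  csInf_image_le_inf' (isCompact_Icc.bddBelow_image (hf.mono (Set.Icc_subset_Icc_left hax))) h
    fun _ hk => ⟨hx.trans (by gcongr; exact (Finset.mem_Icc.1 hk).1),
      (add_nat_mul_mem_Icc hΔ (Finset.mem_Icc.1 hk).2).2⟩

theorem LipschitzOnWith.inf'_Icc_succ_le_add_mul_half
    (hf : LipschitzOnWith K f (Set.Icc a (a + N * Δ))) (hΔ : 0 < Δ) {y : ℝ}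
    (hy₁ : a + k₀ * Δ + Δ / 2 ≤ y) (hy₂ : y ≤ a + N * Δ) (h : (Finset.Icc (k₀ + 1) N).Nonempty) :
    (Finset.Icc (k₀ + 1) N).inf' h (fun k => f (a + k * Δ)) ≤ f y + K * (Δ / 2) := by
  obtain ⟨k, hk, hky⟩ := exists_grid_abs_sub_le_half hΔ hy₁ hy₂
  have hy : y ∈ Set.Icc a (a + N * Δ) :=
    ⟨by nlinarith [(Nat.cast_nonneg k₀ : (0 : ℝ) ≤ k₀)], hy₂⟩
  have hfk := hf.le_add_mul (add_nat_mul_mem_Icc hΔ.le (Finset.mem_Icc.1 hk).2) hy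
  rw [Real.dist_eq] at hfk
  calc _ ≤ f (a + k * Δ) := Finset.inf'_le _ hk
    _ ≤ f y + K * (Δ / 2) := hfk.trans (by gcongr)

theorem sInf_image_Icc_sub_interp_le (hf : LipschitzOnWith K f (Set.Icc a (a + N * Δ)))
    (hΔ : 0 ≤ Δ) (hk₀ : k₀ < N) {p : ℝ} (hp : p ∈ Set.Icc (0 : ℝ) 1) :
    sInf (f '' Set.Icc (a + k₀ * Δ + (1 - p) * Δ) (a + N * Δ))
        - (p * (f (a + k₀ * Δ) ⊓ (Finset.Icc (k₀ + 1) N).inf' (Finset.nonempty_Icc.2 hk₀)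
            fun k => f (a + k * Δ))
          + (1 - p) * (Finset.Icc (k₀ + 1) N).inf' (Finset.nonempty_Icc.2 hk₀)
            fun k => f (a + k * Δ))
      ≤ K * Δ / 2 := by
  obtain ⟨hp₀, hp₁⟩ := hp
  have hd : 0 ≤ (1 - p) * Δ := mul_nonneg (sub_nonneg.2 hp₁) hΔ
  have hi := add_nat_mul_mem_Icc (a := a) hΔ hk₀.le
  have hj := add_nat_mul_mem_Icc (a := a) hΔ hk₀
  have hxj : a + k₀ * Δ + (1 - p) * Δ ≤ a + (k₀ + 1 : ℕ) * Δ := by push_cast; nlinarith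
  have h₁ := hf.sInf_image_Icc_le_add_mul hi.1 (le_add_of_nonneg_right hd) (hxj.trans hj.2)
  have h₂ := sInf_image_Icc_le_inf'_Icc_succ hf.continuousOn hΔ (hi.1.trans
    (le_add_of_nonneg_right hd)) hxj (Finset.nonempty_Icc.2 hk₀)
  rw [add_sub_cancel_left] at h₁
  set m := sInf (f '' Set.Icc (a + k₀ * Δ + (1 - p) * Δ) (a + N * Δ))
  set m₂ := (Finset.Icc (k₀ + 1) N).inf' (Finset.nonempty_Icc.2 hk₀) fun k => f (a + k * Δ)
  have h₃ : m - K * ((1 - p) * Δ) ≤ f (a + k₀ * Δ) ⊓ m₂ :=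
    le_inf (by linarith) (by linarith [mul_nonneg K.coe_nonneg hd])
  nlinarith [mul_le_mul_of_nonneg_left h₃ hp₀, mul_le_mul_of_nonneg_left h₂ (sub_nonneg.2 hp₁),
    mul_nonneg (mul_nonneg K.coe_nonneg hΔ) (sq_nonneg (p - 1 / 2))]

theorem interp_sub_sInf_image_Icc_le (hf : LipschitzOnWith K f (Set.Icc a (a + N * Δ)))
    (hΔ : 0 < Δ) (hk₀ : k₀ < N) {p : ℝ} (hp : p ∈ Set.Icc (0 : ℝ) 1) :
    p * (f (a + k₀ * Δ) ⊓ (Finset.Icc (k₀ + 1) N).inf' (Finset.nonempty_Icc.2 hk₀)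
            fun k => f (a + k * Δ))
          + (1 - p) * (Finset.Icc (k₀ + 1) N).inf' (Finset.nonempty_Icc.2 hk₀)
            (fun k => f (a + k * Δ))
        - sInf (f '' Set.Icc (a + k₀ * Δ + (1 - p) * Δ) (a + N * Δ))
      ≤ K * Δ / 2 := by
  have ⟨hp₀, hp₁⟩ := hp
  have hi := add_nat_mul_mem_Icc (a := a) hΔ.le hk₀.le
  have hj := add_nat_mul_mem_Icc (a := a) hΔ.le hk₀
  rw [Nat.cast_succ, add_one_mul, ← add_assoc] at hj
  set m₂ := (Finset.Icc (k₀ + 1) N).inf' (Finset.nonempty_Icc.2 hk₀) fun k => f (a + k * Δ)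
  rw [sub_le_comm]
  refine le_csInf ⟨_, Set.mem_image_of_mem f ⟨le_rfl, by nlinarith [hj.2]⟩⟩
    (Set.forall_mem_image.2 fun y hy => ?_)
  rw [sub_le_iff_le_add, mul_div_assoc]
  rcases le_total y (a + k₀ * Δ + Δ / 2) with hy' | hy'
  · have hm₂ : m₂ ≤ f (a + k₀ * Δ + Δ) :=
      (Finset.inf'_le _ (Finset.mem_Icc.2 ⟨le_rfl, hk₀⟩)).trans_eq (by push_cast; ring_nf)
    calc _ ≤ p * f (a + k₀ * Δ) + (1 - p) * f (a + k₀ * Δ + Δ) := by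
          gcongr
          exact inf_le_left
      _ ≤ f y + K * (Δ / 2) := hf.interp_le_add_mul_half hΔ.le hi hj
          ⟨hi.1.trans (by nlinarith [hy.1]), hy.2⟩ hp hy.1 hy'
  · calc _ ≤ m₂ := by nlinarith [inf_le_right (a := f (a + k₀ * Δ)) (b := m₂)]
      _ ≤ f y + K * (Δ / 2) := hf.inf'_Icc_succ_le_add_mul_half hΔ hy' hy.2 _

end Grid

/-- The discretization-error bound `ε_A ≤ L·Δ/2` in the proof of Theorem E.1(b): for an
`L`-Lipschitz `f` on `[a,b]`, a uniform grid `G = {a + kΔ : k = 0,…,N}` with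
`a + NΔ = b`, adjacent grid points `i = a + k₀Δ` and `j = i + Δ`, `p ∈ [0,1]` and
`x_p = p·i + (1-p)·j`, the running minimum of `f` over `[x_p, b]` differs from the
`p`-interpolation of the grid-based running minima at `i` and `j` by at most `L·Δ/2`. -/
theorem stmt_18 (a Lc Δ : ℝ) (N k₀ : ℕ) (b : ℝ) (f : ℝ → ℝ)
    (hΔ : 0 < Δ) (hgrid : a + N * Δ = b) (hk₀ : k₀ < N)
    (hlip : ∀ x ∈ Set.Icc a b, ∀ y ∈ Set.Icc a b, |f x - f y| ≤ Lc * |x - y|)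
    (p : ℝ) (hp : p ∈ Set.Icc (0:ℝ) 1) :
    |sInf (f '' Set.Icc (p * (a + k₀ * Δ) + (1 - p) * (a + (k₀ + 1 : ℕ) * Δ)) b)
        - (p * (Finset.Icc k₀ N).inf' (Finset.nonempty_Icc.mpr (le_of_lt hk₀))
              (fun k => f (a + k * Δ))
           + (1 - p) * (Finset.Icc (k₀ + 1) N).inf' (Finset.nonempty_Icc.mpr hk₀)
              (fun k => f (a + k * Δ)))|
      ≤ Lc * Δ / 2 := by
  subst hgrid
  have hNΔ : 0 < N * Δ := mul_pos (Nat.cast_pos.2 (Nat.zero_lt_of_lt hk₀)) hΔ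
  have hLc : 0 ≤ Lc := by
    have h := hlip a ⟨le_rfl, by linarith⟩ (a + N * Δ) ⟨by linarith, le_rfl⟩
    exact nonneg_of_mul_nonneg_left ((abs_nonneg _).trans h) (abs_pos.2 (by linarith))
  have hf : LipschitzOnWith Lc.toNNReal f (Set.Icc a (a + N * Δ)) :=
    .of_dist_le' (by simpa only [Real.dist_eq] using hlip)
  have hxp : p * (a + k₀ * Δ) + (1 - p) * (a + (k₀ + 1 : ℕ) * Δ) = a + k₀ * Δ + (1 - p) * Δ := by
    push_cast; ring
  rw [hxp, Finset.inf'_Icc_eq_inf_inf'_Icc_succ hk₀, ← Real.coe_toNNReal Lc hLc, abs_sub_le_iff]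
  exact ⟨sInf_image_Icc_sub_interp_le hf hΔ.le hk₀ hp, interp_sub_sInf_image_Icc_le hf hΔ hk₀ hp⟩
end

section
/- Let β, γ ∈ (0,1), c⁺ > 0, c⁻ ≥ 0, r ∈ ℝ, δ ≥ 0, and μ ≥ δ/(1−γ). Suppose W : [0,μ] → ℝ is Lipschitz (with some finite constant) and satisfies the restricted two-level Bellman equation. Then W is nondecreasing and c⁺-Lipschitz on [0,μ]. -/
/-- The objective of the (restricted) two-level Bellman equation. -/
noncomputable def rbellObj (β γ cplus cminus r δ μ : ℝ) (W : ℝ → ℝ) (xt u : ℝ) : ℝ :=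
  (1 - β * γ) * cplus * xt + cminus * u
    - (r + β * cplus * δ) * (if μ ≤ xt + u then 1 else 0)
    + β * W (γ * xt + δ * (if μ ≤ xt + u then 1 else 0))

/-- Right-hand side of the restricted two-level Bellman equation:
infimum over `x̃ ∈ [x,μ]` and `u ≥ 0` of the Bellman objective. -/
noncomputable def rbellRHS (β γ cplus cminus r δ μ : ℝ) (W : ℝ → ℝ) (x : ℝ) : ℝ :=
  sInf { v : ℝ | ∃ xt u : ℝ, x ≤ xt ∧ xt ≤ μ ∧ 0 ≤ u ∧
    v = rbellObj β γ cplus cminus r δ μ W xt u }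

/-- From the proof of Theorem E.1: any Lipschitz solution `W` of the restricted
two-level Bellman equation on `[0,μ]` (with `μ ≥ δ/(1-γ)`) is nondecreasing and
`c⁺`-Lipschitz on `[0,μ]`. -/
theorem stmt_19 (β γ cplus cminus r δ μ : ℝ)
    (hβ : β ∈ Set.Ioo (0:ℝ) 1) (hγ : γ ∈ Set.Ioo (0:ℝ) 1)
    (hcp : 0 < cplus) (hcm : 0 ≤ cminus) (hδ : 0 ≤ δ) (hμpos : 0 < μ)
    (hμ : δ / (1 - γ) ≤ μ)
    (W : ℝ → ℝ)
    (hWlip : ∃ C : ℝ, ∀ x ∈ Set.Icc (0:ℝ) μ, ∀ y ∈ Set.Icc (0:ℝ) μ,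
      |W x - W y| ≤ C * |x - y|)
    (hWfix : ∀ x ∈ Set.Icc (0:ℝ) μ, W x = rbellRHS β γ cplus cminus r δ μ W x) :
    MonotoneOn W (Set.Icc 0 μ)
    ∧ ∀ x ∈ Set.Icc (0:ℝ) μ, ∀ y ∈ Set.Icc (0:ℝ) μ, |W x - W y| ≤ cplus * |x - y| := by
  obtain ⟨hβ0, hβ1⟩ := hβ
  obtain ⟨hγ0, hγ1⟩ := hγ
  obtain ⟨C, hC⟩ := hWlip
  have hβγ0 : 0 < β * γ := mul_pos hβ0 hγ0
  have hβγ1 : β * γ < 1 := by nlinarith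
  have hC0 : 0 ≤ C := by
    have h := hC 0 ⟨le_refl 0, hμpos.le⟩ μ ⟨hμpos.le, le_refl μ⟩
    have h2 : (0:ℝ) ≤ C * |0 - μ| := le_trans (abs_nonneg _) h
    have habs : |(0:ℝ) - μ| = μ := by rw [zero_sub, abs_neg, abs_of_pos hμpos]
    rw [habs] at h2
    nlinarith
  have hδle : δ ≤ (1 - γ) * μ := by
    rw [div_le_iff₀ (by linarith)] at hμ; linarith
  -- the argument of W stays in [0, μ]
  have harg : ∀ xt : ℝ, 0 ≤ xt → xt ≤ μ → ∀ i : ℝ, 0 ≤ i → i ≤ 1 →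
      γ * xt + δ * i ∈ Set.Icc (0:ℝ) μ := by
    intro xt h0 h1 i hi0 hi1
    constructor
    · nlinarith
    · nlinarith
  have hobj_ge : ∀ xt u : ℝ, 0 ≤ xt → xt ≤ μ → 0 ≤ u →
      β * (W 0 - C * μ) - |r + β * cplus * δ| ≤ rbellObj β γ cplus cminus r δ μ W xt u := by
    intro xt u h0 h1 hu
    unfold rbellObj
    set i : ℝ := if μ ≤ xt + u then (1:ℝ) else 0 with hi
    have hi0 : 0 ≤ i := by rw [hi]; split <;> norm_num
    have hi1 : i ≤ 1 := by rw [hi]; split <;> norm_num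
    have hargm := harg xt h0 h1 i hi0 hi1
    have hWb : |W (γ * xt + δ * i) - W 0| ≤ C * μ := by
      calc |W (γ * xt + δ * i) - W 0| ≤ C * |γ * xt + δ * i - 0| :=
            hC _ hargm 0 ⟨le_refl 0, hμpos.le⟩
        _ ≤ C * μ := by
            rw [sub_zero, abs_of_nonneg hargm.1]
            exact mul_le_mul_of_nonneg_left hargm.2 hC0
    have habsR : -|r + β * cplus * δ| ≤ -((r + β * cplus * δ) * i) := by
      rcases abs_cases (r + β * cplus * δ) with ⟨h, _⟩ | ⟨h, _⟩ <;> nlinarith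
    have h1' : 0 ≤ (1 - β * γ) * cplus * xt :=
      mul_nonneg (mul_nonneg (by linarith) hcp.le) h0
    have h2' : 0 ≤ cminus * u := mul_nonneg hcm hu
    have h3' : β * (W 0 - C * μ) ≤ β * W (γ * xt + δ * i) := by
      have := (abs_le.mp hWb).1
      nlinarith
    linarith
  set S : ℝ → Set ℝ := fun x => {v : ℝ | ∃ xt u : ℝ, x ≤ xt ∧ xt ≤ μ ∧ 0 ≤ u ∧
    v = rbellObj β γ cplus cminus r δ μ W xt u} with hSdef
  have hne : ∀ x : ℝ, x ≤ μ → (S x).Nonempty := by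
    intro x hx
    exact ⟨_, μ, 0, hx, le_refl μ, le_refl 0, rfl⟩
  have hbdd : ∀ x : ℝ, 0 ≤ x → BddBelow (S x) := by
    intro x hx
    refine ⟨β * (W 0 - C * μ) - |r + β * cplus * δ|, ?_⟩
    rintro v ⟨xt, u, hxxt, hxtμ, hu, rfl⟩
    exact hobj_ge xt u (le_trans hx hxxt) hxtμ hu
  have hW' : ∀ x ∈ Set.Icc (0:ℝ) μ, W x = sInf (S x) := fun x hx => hWfix x hx
  -- monotonicity
  have hmono : ∀ x ∈ Set.Icc (0:ℝ) μ, ∀ y ∈ Set.Icc (0:ℝ) μ, x ≤ y → W x ≤ W y := by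
    intro x hx y hy hxy
    rw [hW' x hx, hW' y hy]
    apply csInf_le_csInf (hbdd x hx.1) (hne y hy.2)
    rintro v ⟨xt, u, hyxt, h2, h3, rfl⟩
    exact ⟨xt, u, le_trans hxy hyxt, h2, h3, rfl⟩
  -- improvement step for y < μ
  have hstep : ∀ K : ℝ, 0 ≤ K →
      (∀ a ∈ Set.Icc (0:ℝ) μ, ∀ b ∈ Set.Icc (0:ℝ) μ, |W a - W b| ≤ K * |a - b|) →
      ∀ x ∈ Set.Icc (0:ℝ) μ, ∀ y ∈ Set.Icc (0:ℝ) μ, x ≤ y → y < μ →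
      W y ≤ W x + ((1 - β * γ) * cplus + β * γ * K) * (y - x) := by
    intro K hK hKlip x hx y hy hxy hyμ
    set K' := (1 - β * γ) * cplus + β * γ * K with hK'def
    have hK'0 : 0 ≤ K' := by nlinarith
    rw [hW' x hx, hW' y hy]
    have hkey : sInf (S y) - K' * (y - x) ≤ sInf (S x) := by
      apply le_csInf (hne x hx.2)
      rintro v ⟨xt, u, hxxt, hxtμ, hu, rfl⟩
      set xt' := max xt y with hxt'def
      set u' := max (xt + u - xt') 0 with hu'def
      have hxt'1 : y ≤ xt' := le_max_right _ _
      have hxt'2 : xt' ≤ μ := max_le hxtμ hy.2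
      have hxtxt' : xt ≤ xt' := le_max_left _ _
      have hu'0 : 0 ≤ u' := le_max_right _ _
      have hd : xt' - xt ≤ y - x := by
        rcases le_total y xt with h | h
        · rw [hxt'def, max_eq_left h]; linarith
        · rw [hxt'def, max_eq_right h]; linarith
      have hsum : xt' + u' = max (xt + u) xt' := by
        rcases le_total (xt + u - xt') 0 with h | h
        · rw [hu'def, max_eq_right h, max_eq_right (by linarith), add_zero]
        · rw [hu'def, max_eq_left h, max_eq_left (by linarith)]; ring
      have hind : (if μ ≤ xt' + u' then (1:ℝ) else 0) = (if μ ≤ xt + u then (1:ℝ) else 0) := by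
        by_cases h : μ ≤ xt + u
        · rw [if_pos h, if_pos (by rw [hsum]; exact le_trans h (le_max_left _ _))]
        · push_neg at h
          have hxtμ' : xt' < μ := max_lt (by linarith) hyμ
          rw [if_neg (by push_neg; rw [hsum]; exact max_lt h hxtμ'), if_neg (by push_neg; exact h)]
      have hmem : rbellObj β γ cplus cminus r δ μ W xt' u' ∈ S y :=
        ⟨xt', u', hxt'1, hxt'2, hu'0, rfl⟩
      have hle : rbellObj β γ cplus cminus r δ μ W xt' u' ≤
          rbellObj β γ cplus cminus r δ μ W xt u + K' * (y - x) := by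
        unfold rbellObj
        rw [hind]
        set i : ℝ := if μ ≤ xt + u then (1:ℝ) else 0 with hidef
        have hi0 : 0 ≤ i := by rw [hidef]; split <;> norm_num
        have hi1 : i ≤ 1 := by rw [hidef]; split <;> norm_num
        have hu'le : u' ≤ u := by rw [hu'def]; exact max_le (by linarith) hu
        have hx0 : 0 ≤ xt := le_trans hx.1 hxxt
        have ha := harg xt hx0 hxtμ i hi0 hi1
        have ha' := harg xt' (le_trans hx0 hxtxt') hxt'2 i hi0 hi1
        have hWd : W (γ * xt' + δ * i) - W (γ * xt + δ * i) ≤ K * (γ * (xt' - xt)) := by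
          have h := hKlip _ ha' _ ha
          have habs : |γ * xt' + δ * i - (γ * xt + δ * i)| = γ * (xt' - xt) := by
            rw [abs_of_nonneg (by nlinarith)]; ring
          calc W (γ * xt' + δ * i) - W (γ * xt + δ * i)
              ≤ |W (γ * xt' + δ * i) - W (γ * xt + δ * i)| := le_abs_self _
            _ ≤ K * |γ * xt' + δ * i - (γ * xt + δ * i)| := h
            _ = K * (γ * (xt' - xt)) := by rw [habs]
        have hb1 : β * (W (γ * xt' + δ * i) - W (γ * xt + δ * i)) ≤
            β * (K * (γ * (xt' - xt))) := mul_le_mul_of_nonneg_left hWd hβ0.le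
        have hb2 : K' * (xt' - xt) ≤ K' * (y - x) := mul_le_mul_of_nonneg_left hd hK'0
        have hb3 : cminus * u' ≤ cminus * u := mul_le_mul_of_nonneg_left hu'le hcm
        have hb4 : (1 - β * γ) * cplus * xt' + β * (K * (γ * (xt' - xt))) =
            (1 - β * γ) * cplus * xt + K' * (xt' - xt) := by rw [hK'def]; ring
        linarith
      have := csInf_le (hbdd y hy.1) hmem
      linarith
    linarith
  -- improvement including y = μ (by continuity)
  have himp : ∀ K : ℝ, 0 ≤ K →
      (∀ a ∈ Set.Icc (0:ℝ) μ, ∀ b ∈ Set.Icc (0:ℝ) μ, |W a - W b| ≤ K * |a - b|) →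
      ∀ x ∈ Set.Icc (0:ℝ) μ, ∀ y ∈ Set.Icc (0:ℝ) μ, x ≤ y →
      W y ≤ W x + ((1 - β * γ) * cplus + β * γ * K) * (y - x) := by
    intro K hK hKlip x hx y hy hxy
    set K' := (1 - β * γ) * cplus + β * γ * K with hK'def
    have hK'0 : 0 ≤ K' := by nlinarith
    rcases lt_or_eq_of_le hy.2 with h | h
    · exact hstep K hK hKlip x hx y hy hxy h
    · rw [h]
      rcases lt_or_eq_of_le hx.2 with hxμ | hxμ
      · refine le_of_forall_pos_le_add ?_
        intro ε hε
        set e := ε / (C + 1) with hedef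
        have he0 : 0 < e := div_pos hε (by linarith)
        set y₀ := max x (μ - e) with hy₀def
        have hy₀1 : x ≤ y₀ := le_max_left _ _
        have hy₀2 : y₀ < μ := max_lt hxμ (by linarith)
        have hy₀m : y₀ ∈ Set.Icc (0:ℝ) μ := ⟨le_trans hx.1 hy₀1, hy₀2.le⟩
        have h1 := hstep K hK hKlip x hx y₀ hy₀m hy₀1 hy₀2
        rw [← hK'def] at h1
        have h2 : |W μ - W y₀| ≤ C * |μ - y₀| := hC μ ⟨hμpos.le, le_refl μ⟩ y₀ hy₀m
        have h3 : W μ - W y₀ ≤ C * (μ - y₀) := by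
          have := le_trans (le_abs_self _) h2
          rwa [abs_of_nonneg (by linarith)] at this
        have h4 : μ - y₀ ≤ e := by
          have : μ - e ≤ y₀ := le_max_right _ _
          linarith
        have h5 : C * (μ - y₀) ≤ C * e := mul_le_mul_of_nonneg_left h4 hC0
        have h6 : C * e ≤ ε := by
          have h := (div_le_one (show (0:ℝ) < C + 1 by linarith)).mpr
            (by linarith : C ≤ C + 1)
          calc C * e = ε * (C / (C + 1)) := by rw [hedef]; ring
            _ ≤ ε * 1 := mul_le_mul_of_nonneg_left h hε.le
            _ = ε := mul_one ε
        have h7 : K' * (y₀ - x) ≤ K' * (μ - x) := mul_le_mul_of_nonneg_left (by linarith) hK'0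
        linarith
      · rw [hxμ]
        have hz : K' * (μ - μ) = 0 := by ring
        linarith
  -- iterated improvement
  set K0 := max C cplus with hK0def
  have hK0c : cplus ≤ K0 := le_max_right _ _
  have hlipn : ∀ n : ℕ, ∀ a ∈ Set.Icc (0:ℝ) μ, ∀ b ∈ Set.Icc (0:ℝ) μ,
      |W a - W b| ≤ (cplus + (β * γ) ^ n * (K0 - cplus)) * |a - b| := by
    intro n
    induction n with
    | zero =>
      intro a ha b hb
      have : cplus + (β * γ) ^ 0 * (K0 - cplus) = K0 := by ring
      rw [this]
      calc |W a - W b| ≤ C * |a - b| := hC a ha b hb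
        _ ≤ K0 * |a - b| := mul_le_mul_of_nonneg_right (le_max_left _ _) (abs_nonneg _)
    | succ n ih =>
      set Kn := cplus + (β * γ) ^ n * (K0 - cplus) with hKndef
      have hKn0 : 0 ≤ Kn := by
        have : (0:ℝ) ≤ (β * γ) ^ n * (K0 - cplus) :=
          mul_nonneg (pow_nonneg hβγ0.le n) (by linarith)
        linarith
      have hKeq : (1 - β * γ) * cplus + β * γ * Kn =
          cplus + (β * γ) ^ (n + 1) * (K0 - cplus) := by rw [hKndef]; ring
      have hone : ∀ x ∈ Set.Icc (0:ℝ) μ, ∀ y ∈ Set.Icc (0:ℝ) μ, x ≤ y →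
          W y ≤ W x + (cplus + (β * γ) ^ (n + 1) * (K0 - cplus)) * (y - x) := by
        intro x hx y hy hxy
        have := himp Kn hKn0 ih x hx y hy hxy
        rwa [hKeq] at this
      intro a ha b hb
      rcases le_total a b with h | h
      · rw [abs_sub_comm, abs_of_nonneg (sub_nonneg.mpr (hmono a ha b hb h)),
          abs_sub_comm, abs_of_nonneg (sub_nonneg.mpr h)]
        have := hone a ha b hb h
        linarith
      · rw [abs_of_nonneg (sub_nonneg.mpr (hmono b hb a ha h)),
          abs_of_nonneg (sub_nonneg.mpr h)]
        have := hone b hb a ha h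
        linarith
  refine ⟨fun x hx y hy hxy => hmono x hx y hy hxy, ?_⟩
  intro x hx y hy
  have hlim : Filter.Tendsto (fun n : ℕ => (cplus + (β * γ) ^ n * (K0 - cplus)) * |x - y|)
      Filter.atTop (nhds (cplus * |x - y|)) := by
    have h1 : Filter.Tendsto (fun n : ℕ => (β * γ) ^ n) Filter.atTop (nhds 0) :=
      tendsto_pow_atTop_nhds_zero_of_lt_one hβγ0.le hβγ1
    have h3 := ((h1.mul_const (K0 - cplus)).const_add cplus).mul_const |x - y|
    have h2 : (cplus + 0 * (K0 - cplus)) * |x - y| = cplus * |x - y| := by ring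
    rw [h2] at h3
    exact h3
  exact ge_of_tendsto' hlim (fun n => hlipn n x hx y hy)
end
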